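/- arXiv:1711.01851 — 10 statements merged into one kernel-verified Lean document; each statement's English description precedes it below -/
import Mathlib

section
/- Let n1, n2 be positive integers and let γ* ∈ ℝ^{n1×n2} have strictly positive entries. Define F(γ) = KL(γ*, γ) for γ ∈ ℝ^{n1×n2} with nonnegative entries (with F(γ) = +∞ if some γ_{ij} = 0 while γ*_{ij} > 0). Then for every M > 0, the sublevel set { γ ∈ ℝ^{n1×n2} : γ has nonnegative entries and F(γ) ≤ M } is compact. -/
/-!
Each summand `g (log (g / x) - 1) + x = x · klFun (g / x)` of the divergence is nonnegative, so
on the sublevel set every summand is at most `M`. A summand at most `M` pins its entry `x` into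
a compact interval `[g / exp (1 + M / g), 2 (M + g log 2)]` of positive reals, and on the
resulting compact box the divergence is a continuous real function.
-/

open scoped BigOperators

open Classical in
/-- `F(γ) = KL(γ*, γ)`, valued in `EReal`, with `F(γ) = ⊤` when some entry of `γ`
vanishes (while `γ*` has positive entries). -/
noncomputable def lyapunovF {n1 n2 : ℕ} (gstar γ : Matrix (Fin n1) (Fin n2) ℝ) : EReal :=
  if ∀ i j, 0 < γ i j then
    (((∑ i, ∑ j, gstar i j * (Real.log (gstar i j / γ i j) - 1)) + ∑ i, ∑ j, γ i j : ℝ) : EReal)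
  else ⊤

open Real InformationTheory Set

noncomputable def klTerm (g x : ℝ) : ℝ := g * (log (g / x) - 1) + x

lemma klTerm_eq_mul_klFun (g : ℝ) {x : ℝ} (hx : x ≠ 0) : klTerm g x = x * klFun (g / x) := by
  rw [klTerm, klFun_apply]
  field_simp
  ring

lemma klTerm_nonneg {g x : ℝ} (hg : 0 ≤ g) (hx : 0 < x) : 0 ≤ klTerm g x := by
  rw [klTerm_eq_mul_klFun g hx.ne']
  exact mul_nonneg hx.le (klFun_nonneg (by positivity))

lemma continuousOn_klTerm (g : ℝ) : ContinuousOn (klTerm g) {0}ᶜ := by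
  refine ContinuousOn.congr ?_ fun x hx => klTerm_eq_mul_klFun g hx
  exact continuousOn_id.mul (continuous_klFun.comp_continuousOn
    (continuousOn_const.div continuousOn_id fun _ hx => hx))

lemma klTerm_half_add {g x : ℝ} (hg : 0 < g) (hx : 0 < x) :
    klTerm g x = klTerm g (x / 2) + (x / 2 - g * log 2) := by
  have hlog : log (g / (x / 2)) = log (g / x) + log 2 := by
    rw [div_div_eq_mul_div, mul_div_right_comm, log_mul (by positivity) two_ne_zero]
  rw [klTerm, klTerm, hlog]
  ring

lemma mem_Icc_of_klTerm_le {g x M : ℝ} (hg : 0 < g) (hx : 0 < x) (h : klTerm g x ≤ M) :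
    x ∈ Icc (g / exp (1 + M / g)) (2 * (M + g * log 2)) := by
  constructor
  · have hlog : log (g / x) ≤ 1 + M / g := by
      have : (log (g / x) - 1) * g ≤ M := by rw [klTerm] at h; linarith
      linarith [(le_div_iff₀ hg).mpr this]
    rw [div_le_iff₀ (exp_pos _), ← div_le_iff₀' hx]
    exact (log_le_iff_le_exp (by positivity)).mp hlog
  · have := klTerm_nonneg hg.le (half_pos hx)
    rw [klTerm_half_add hg hx] at h
    linarith

section

variable {m n : Type*}

lemma isCompact_setOf_forall_mem_Icc (lo hi : Matrix m n ℝ) :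
    IsCompact {γ : Matrix m n ℝ | ∀ i j, γ i j ∈ Icc (lo i j) (hi i j)} := by
  have hpi : {γ : Matrix m n ℝ | ∀ i j, γ i j ∈ Icc (lo i j) (hi i j)} =
      univ.pi fun i => univ.pi fun j => Icc (lo i j) (hi i j) := by
    ext γ
    exact ⟨fun h i _ j _ => h i j, fun h i j => h i (mem_univ i) j (mem_univ j)⟩
  rw [hpi]
  exact isCompact_univ_pi fun i => isCompact_univ_pi fun j => isCompact_Icc

variable [Fintype m] [Fintype n]

noncomputable def entrywiseKL (gstar γ : Matrix m n ℝ) : ℝ :=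
  ∑ i, ∑ j, klTerm (gstar i j) (γ i j)

lemma klTerm_le_entrywiseKL {gstar γ : Matrix m n ℝ} (hg : ∀ i j, 0 ≤ gstar i j)
    (hγ : ∀ i j, 0 < γ i j) (i : m) (j : n) :
    klTerm (gstar i j) (γ i j) ≤ entrywiseKL gstar γ := by
  have hterm : ∀ i j, 0 ≤ klTerm (gstar i j) (γ i j) := fun i j => klTerm_nonneg (hg i j) (hγ i j)
  calc klTerm (gstar i j) (γ i j) ≤ ∑ j, klTerm (gstar i j) (γ i j) :=
        Finset.single_le_sum (fun j _ => hterm i j) (Finset.mem_univ j)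
    _ ≤ entrywiseKL gstar γ :=
        Finset.single_le_sum (fun i _ => Finset.sum_nonneg fun j _ => hterm i j) (Finset.mem_univ i)

lemma continuousOn_entrywiseKL (gstar : Matrix m n ℝ) :
    ContinuousOn (entrywiseKL gstar) {γ | ∀ i j, γ i j ≠ 0} := by
  refine continuousOn_finsetSum _ fun i _ => continuousOn_finsetSum _ fun j _ => ?_
  exact (continuousOn_klTerm _).comp (continuous_apply_apply i j).continuousOn fun γ hγ => hγ i j

lemma isCompact_setOf_entrywiseKL_le {gstar : Matrix m n ℝ} (hg : ∀ i j, 0 < gstar i j) (M : ℝ) :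
    IsCompact {γ : Matrix m n ℝ | (∀ i j, 0 < γ i j) ∧ entrywiseKL gstar γ ≤ M} := by
  set box := {γ : Matrix m n ℝ | ∀ i j,
    γ i j ∈ Icc (gstar i j / exp (1 + M / gstar i j)) (2 * (M + gstar i j * log 2))}
  have hbox : IsCompact box := isCompact_setOf_forall_mem_Icc _ _
  have hpos : ∀ γ ∈ box, ∀ i j, 0 < γ i j := fun γ hγ i j =>
    lt_of_lt_of_le (by have := hg i j; positivity) (hγ i j).1
  have hset : {γ : Matrix m n ℝ | (∀ i j, 0 < γ i j) ∧ entrywiseKL gstar γ ≤ M} =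
      box ∩ entrywiseKL gstar ⁻¹' Iic M := by
    ext γ
    refine ⟨fun ⟨hγ, hle⟩ => ⟨fun i j => ?_, hle⟩, fun ⟨hγ, hle⟩ => ⟨hpos γ hγ, hle⟩⟩
    exact mem_Icc_of_klTerm_le (hg i j) (hγ i j)
      ((klTerm_le_entrywiseKL (fun i j => (hg i j).le) hγ i j).trans hle)
  rw [hset]
  refine hbox.of_isClosed_subset ?_ inter_subset_left
  refine ContinuousOn.preimage_isClosed_of_isClosed ?_ hbox.isClosed isClosed_Iic
  exact (continuousOn_entrywiseKL gstar).mono fun γ hγ i j => (hpos γ hγ i j).ne'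

end

lemma lyapunovF_le_coe_iff {n1 n2 : ℕ} (gstar γ : Matrix (Fin n1) (Fin n2) ℝ) (M : ℝ) :
    lyapunovF gstar γ ≤ M ↔ (∀ i j, 0 < γ i j) ∧ entrywiseKL gstar γ ≤ M := by
  unfold lyapunovF
  split_ifs with hγ
  · simp only [hγ, implies_true, true_and, EReal.coe_le_coe_iff, entrywiseKL, klTerm,
      Finset.sum_add_distrib]
  · simp [hγ]

theorem stmt_0_general (n1 n2 : ℕ)
    (gstar : Matrix (Fin n1) (Fin n2) ℝ) (hgs : ∀ i j, 0 < gstar i j)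
    (M : ℝ) :
    IsCompact {γ : Matrix (Fin n1) (Fin n2) ℝ |
      (∀ i j, 0 ≤ γ i j) ∧ lyapunovF gstar γ ≤ (M : EReal)} := by
  convert isCompact_setOf_entrywiseKL_le hgs M using 1
  ext γ
  rw [mem_ofPred_eq, mem_ofPred_eq, lyapunovF_le_coe_iff]
  exact ⟨fun h => h.2, fun h => ⟨fun i j => (h.1 i j).le, h⟩⟩

theorem stmt_0 (n1 n2 : ℕ) (hn1 : 0 < n1) (hn2 : 0 < n2)
    (gstar : Matrix (Fin n1) (Fin n2) ℝ) (hgs : ∀ i j, 0 < gstar i j)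
    (M : ℝ) (hM : 0 < M) :
    IsCompact {γ : Matrix (Fin n1) (Fin n2) ℝ |
      (∀ i j, 0 ≤ γ i j) ∧ lyapunovF gstar γ ≤ (M : EReal)} :=
  stmt_0_general n1 n2 gstar hgs M
end

section
/- Let n1, n2 be positive integers, let μ1 ∈ ℝ^{n1} have strictly positive entries, and let γ*, γ ∈ ℝ^{n1×n2} have strictly positive entries with A1γ* = μ1. Then for every ω ∈ ℝ, KL(γ*, γ) − KL(γ*, P^ω_{C1}(γ)) = Σ_i μ1_i · φ_ω((A1γ)_i / μ1_i). -/
open scoped BigOperators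

/-- Kullback–Leibler divergence between two matrices with positive entries. -/
noncomputable def KL {n1 n2 : ℕ} (γ ξ : Matrix (Fin n1) (Fin n2) ℝ) : ℝ :=
  (∑ i, ∑ j, γ i j * (Real.log (γ i j / ξ i j) - 1)) + ∑ i, ∑ j, ξ i j

/-- The ω-overrelaxed projection onto `C1 = {γ : A1 γ = μ1}`:
`P^ω_{C1}(γ)_{ij} = γ_{ij} (μ1_i / (A1 γ)_i)^ω`. -/
noncomputable def P1 {n1 n2 : ℕ} (μ1 : Fin n1 → ℝ) (ω : ℝ)
    (γ : Matrix (Fin n1) (Fin n2) ℝ) : Matrix (Fin n1) (Fin n2) ℝ :=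
  Matrix.of fun i j => γ i j * (μ1 i / ∑ j', γ i j') ^ ω

/-- `φ_ω(x) = x(1 - x^{-ω}) - ω log x`. -/
noncomputable def phi (ω x : ℝ) : ℝ := x * (1 - x ^ (-ω)) - ω * Real.log x

theorem stmt_1 (n1 n2 : ℕ) (hn1 : 0 < n1) (hn2 : 0 < n2)
    (μ1 : Fin n1 → ℝ) (hμ1 : ∀ i, 0 < μ1 i)
    (gstar γ : Matrix (Fin n1) (Fin n2) ℝ)
    (hgs : ∀ i j, 0 < gstar i j) (hγ : ∀ i j, 0 < γ i j)
    (hmarg : ∀ i, ∑ j, gstar i j = μ1 i) (ω : ℝ) :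
    KL gstar γ - KL gstar (P1 μ1 ω γ) =
      ∑ i, μ1 i * phi ω ((∑ j, γ i j) / μ1 i) := by
  unfold KL P1
  rw [← Finset.sum_add_distrib, ← Finset.sum_add_distrib, ← Finset.sum_sub_distrib]
  apply Finset.sum_congr rfl
  intro i _
  set s : ℝ := ∑ j, γ i j with hs_def
  have hs : 0 < s := Finset.sum_pos (fun j _ => hγ i j) (Finset.univ_nonempty_iff.2 ⟨⟨0, hn2⟩⟩)
  have hμ : 0 < μ1 i := hμ1 i
  set r : ℝ := μ1 i / s with hr_def
  have hr : 0 < r := div_pos hμ hs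
  have h1 : ∀ j : Fin n2,
      gstar i j * (Real.log (gstar i j / γ i j) - 1) -
        gstar i j * (Real.log (gstar i j / (Matrix.of (fun i j => γ i j * (μ1 i / ∑ j', γ i j') ^ ω) i j)) - 1)
      = gstar i j * (ω * Real.log r) := by
    intro j
    have hg := hgs i j
    have hc := hγ i j
    have hrw : 0 < r ^ ω := Real.rpow_pos_of_pos hr ω
    simp only [Matrix.of_apply, ← hs_def, ← hr_def]
    rw [Real.log_div hg.ne' hc.ne',
        Real.log_div hg.ne' (by positivity : (γ i j * r ^ ω) ≠ 0),
        Real.log_mul hc.ne' hrw.ne', Real.log_rpow hr]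
    ring
  rw [show (∑ j, gstar i j * (Real.log (gstar i j / γ i j) - 1) + ∑ j, γ i j) -
        (∑ j, gstar i j *
            (Real.log (gstar i j / Matrix.of (fun i j => γ i j * (μ1 i / ∑ j', γ i j') ^ ω) i j) - 1) +
          ∑ j, Matrix.of (fun i j => γ i j * (μ1 i / ∑ j', γ i j') ^ ω) i j)
      = (∑ j, (gstar i j * (Real.log (gstar i j / γ i j) - 1) -
          gstar i j *
            (Real.log (gstar i j / Matrix.of (fun i j => γ i j * (μ1 i / ∑ j', γ i j') ^ ω) i j) - 1)))
        + (s - ∑ j, Matrix.of (fun i j => γ i j * (μ1 i / ∑ j', γ i j') ^ ω) i j) by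
        rw [Finset.sum_sub_distrib]; ring]
  rw [Finset.sum_congr rfl (fun j _ => h1 j), ← Finset.sum_mul, hmarg i]
  have h2 : (∑ j, Matrix.of (fun i j => γ i j * (μ1 i / ∑ j', γ i j') ^ ω) i j) = s * r ^ ω := by
    simp only [Matrix.of_apply, ← hs_def, ← hr_def, ← Finset.sum_mul]
  rw [h2, phi]
  have h3 : (s / μ1 i) ^ (-ω) = r ^ ω := by
    rw [Real.rpow_neg (by positivity), hr_def, ← Real.inv_rpow (by positivity), inv_div]
  have h4 : Real.log (s / μ1 i) = -Real.log r := by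
    rw [Real.log_div hs.ne' hμ.ne', hr_def, Real.log_div hμ.ne' hs.ne']; ring
  rw [h3, h4]
  field_simp
  ring
end

section
/- Let n1, n2 be positive integers, let γ0 ∈ ℝ^{n1×n2} have strictly positive entries, and let μ1 ∈ ℝ^{n1}, μ2 ∈ ℝ^{n2} have strictly positive entries with Σ_i μ1_i = Σ_j μ2_j. Let S = { diag(a)·γ0·diag(b) : a ∈ ℝ^{n1}, b ∈ ℝ^{n2}, all entries of a and b positive }. Then the set S ∩ C1 ∩ C2 contains exactly one element, i.e., there exists exactly one matrix of the form diag(a)·γ0·diag(b) with positive scaling vectors whose row sums equal μ1 and whose column sums equal μ2. -/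
open scoped BigOperators
open Real Finset

section SinkhornAux

variable {n1 n2 : ℕ}

private lemma div_trick {μ m c x : ℝ} (hm : 0 < m) (hμ : m ≤ μ) (hc : 0 ≤ c)
    (h : -c ≤ μ * x) : -(c / m) ≤ x := by
  have h2 : -c ≤ m * x := by
    rcases le_or_gt 0 x with hx | hx
    · nlinarith
    · nlinarith
  have h3 : (-c) / m ≤ (m * x) / m := (div_le_div_iff_of_pos_right hm).mpr h2
  have h4 : (m * x) / m = x := by field_simp
  rw [h4, neg_div] at h3
  exact h3


/-- Key elementary inequality: `a * t ≤ ε * exp t + a * log (a/ε) - a`. -/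
private lemma exp_lin_bound {a ε : ℝ} (ha : 0 < a) (hε : 0 < ε) (t : ℝ) :
    a * t ≤ ε * Real.exp t + a * Real.log (a / ε) - a := by
  have hae : 0 < a / ε := div_pos ha hε
  have h := Real.add_one_le_exp (t - Real.log (a / ε))
  have he : Real.exp (t - Real.log (a / ε)) = Real.exp t * ε / a := by
    rw [Real.exp_sub, Real.exp_log hae]
    field_simp
  rw [he] at h
  have := mul_le_mul_of_nonneg_left h ha.le
  have hane : a ≠ 0 := ne_of_gt ha
  calc a * t = a * (t - Real.log (a/ε) + 1) + a * Real.log (a/ε) - a := by ring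
    _ ≤ a * (Real.exp t * ε / a) + a * Real.log (a/ε) - a := by linarith
    _ = ε * Real.exp t + a * Real.log (a/ε) - a := by field_simp

private lemma eq_zero_of_exp_le {x : ℝ} (h : Real.exp x ≤ 1 + x) : x = 0 := by
  by_contra hx
  have := Real.add_one_lt_exp hx
  linarith

/-- The potential function. -/
private noncomputable def Gfun (γ0 : Matrix (Fin n1) (Fin n2) ℝ) (μ1 : Fin n1 → ℝ)
    (μ2 : Fin n2 → ℝ) (p : (Fin n1 → ℝ) × (Fin n2 → ℝ)) : ℝ :=
  ∑ i, ∑ j, γ0 i j * Real.exp (p.1 i + p.2 j)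
    - ∑ i, μ1 i * p.1 i - ∑ j, μ2 j * p.2 j

private lemma Gfun_continuous (γ0 : Matrix (Fin n1) (Fin n2) ℝ) (μ1 : Fin n1 → ℝ)
    (μ2 : Fin n2 → ℝ) : Continuous (Gfun γ0 μ1 μ2) := by
  unfold Gfun
  fun_prop

private lemma Gfun_swap (γ0 : Matrix (Fin n1) (Fin n2) ℝ) (μ1 : Fin n1 → ℝ)
    (μ2 : Fin n2 → ℝ) (u : Fin n1 → ℝ) (v : Fin n2 → ℝ) :
    Gfun γ0 μ1 μ2 (u, v) = Gfun γ0.transpose μ2 μ1 (v, u) := by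
  unfold Gfun
  rw [Finset.sum_comm]
  simp only [Matrix.transpose_apply]
  have : ∀ j, ∀ i, γ0 i j * Real.exp (u i + v j) = γ0 i j * Real.exp (v j + u i) := by
    intro j i; rw [add_comm]
  rw [show (∑ j, ∑ i, γ0 i j * Real.exp (u i + v j)) = ∑ j, ∑ i, γ0 i j * Real.exp (v j + u i) by
    exact Finset.sum_congr rfl fun j _ => Finset.sum_congr rfl fun i _ => this j i]
  ring

/-- Value change when updating one `u` coordinate. -/
private lemma Gfun_update (γ0 : Matrix (Fin n1) (Fin n2) ℝ) (μ1 : Fin n1 → ℝ)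
    (μ2 : Fin n2 → ℝ) (u : Fin n1 → ℝ) (v : Fin n2 → ℝ) (i : Fin n1) (w : ℝ) :
    Gfun γ0 μ1 μ2 (Function.update u i w, v) =
      Gfun γ0 μ1 μ2 (u, v)
        + (Real.exp w - Real.exp (u i)) * (∑ j, γ0 i j * Real.exp (v j))
        - μ1 i * (w - u i) := by
  have key : ∀ x : ℝ, ∑ j, γ0 i j * Real.exp (x + v j)
      = Real.exp x * ∑ j, γ0 i j * Real.exp (v j) := by
    intro x
    rw [Finset.mul_sum]
    exact Finset.sum_congr rfl fun j _ => by rw [Real.exp_add]; ring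
  have hne : ∀ i' ∈ univ \ {i}, i' ≠ i := fun i' hi' =>
    by simpa using (Finset.mem_sdiff.mp hi').2
  have h1 : ∑ i', ∑ j, γ0 i' j * Real.exp (Function.update u i w i' + v j)
      = (∑ i' ∈ univ \ {i}, ∑ j, γ0 i' j * Real.exp (u i' + v j))
        + Real.exp w * ∑ j, γ0 i j * Real.exp (v j) := by
    rw [Finset.sum_eq_sum_sdiff_singleton_add (mem_univ i)]
    congr 1
    · exact Finset.sum_congr rfl fun i' hi' => by rw [Function.update_of_ne (hne i' hi')]
    · rw [Function.update_self, key]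
  have h1' : ∑ i', ∑ j, γ0 i' j * Real.exp (u i' + v j)
      = (∑ i' ∈ univ \ {i}, ∑ j, γ0 i' j * Real.exp (u i' + v j))
        + Real.exp (u i) * ∑ j, γ0 i j * Real.exp (v j) := by
    rw [Finset.sum_eq_sum_sdiff_singleton_add (mem_univ i), key]
  have h2 : ∑ i', μ1 i' * Function.update u i w i'
      = (∑ i' ∈ univ \ {i}, μ1 i' * u i') + μ1 i * w := by
    rw [Finset.sum_eq_sum_sdiff_singleton_add (mem_univ i), Function.update_self]
    congr 1
    exact Finset.sum_congr rfl fun i' hi' => by rw [Function.update_of_ne (hne i' hi')]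
  have h2' : ∑ i', μ1 i' * u i' = (∑ i' ∈ univ \ {i}, μ1 i' * u i') + μ1 i * u i :=
    Finset.sum_eq_sum_sdiff_singleton_add (mem_univ i) _
  unfold Gfun
  simp only
  rw [h1, h1', h2, h2']
  ring

/-- Minimality along one coordinate forces the row condition. -/
private lemma row_condition (γ0 : Matrix (Fin n1) (Fin n2) ℝ) (μ1 : Fin n1 → ℝ)
    (μ2 : Fin n2 → ℝ) (hγ0 : ∀ i j, 0 < γ0 i j) (hn2 : 0 < n2)
    (u : Fin n1 → ℝ) (v : Fin n2 → ℝ) (i : Fin n1) (hμ : 0 < μ1 i)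
    (hle : Gfun γ0 μ1 μ2 (u, v) ≤
      Gfun γ0 μ1 μ2 (Function.update u i
        (Real.log (μ1 i / ∑ j, γ0 i j * Real.exp (v j))), v)) :
    ∑ j, γ0 i j * Real.exp (u i + v j) = μ1 i := by
  set A := ∑ j, γ0 i j * Real.exp (v j) with hA_def
  have hA : 0 < A := Finset.sum_pos (fun j _ => mul_pos (hγ0 i j) (Real.exp_pos _))
    (by simpa using Finset.univ_nonempty_iff.mpr (Fin.pos_iff_nonempty.mp hn2))
  rw [Gfun_update] at hle
  have h : 0 ≤ (Real.exp (Real.log (μ1 i / A)) - Real.exp (u i)) * A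
      - μ1 i * (Real.log (μ1 i / A) - u i) := by linarith
  have main : Real.exp (u i) * A = μ1 i := by
    set w := Real.log (μ1 i / A) with hw
    have hew : Real.exp w = μ1 i / A := Real.exp_log (div_pos hμ hA)
    have hx : Real.exp (u i - w) ≤ 1 + (u i - w) := by
      have he : Real.exp (u i) = (μ1 i / A) * Real.exp (u i - w) := by
        rw [← hew, ← Real.exp_add]; ring_nf
      rw [he] at h
      have hAne : A ≠ 0 := ne_of_gt hA
      have hwA : Real.exp w * A = μ1 i := by rw [hew]; field_simp
      have h' : 0 ≤ μ1 i - μ1 i * Real.exp (u i - w) - μ1 i * (w - u i) := by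
        field_simp at h
        nlinarith [h, hwA]
      nlinarith [hμ]
    have h0 : u i - w = 0 := eq_zero_of_exp_le hx
    have ht : u i = w := by linarith
    rw [ht, hew]
    field_simp
  rw [← main, Finset.mul_sum]
  exact Finset.sum_congr rfl fun j _ => by rw [Real.exp_add]; ring

set_option maxHeartbeats 2000000 in
/-- Sublevel sets of `Gfun` on the slice `u i0 = 0` are bounded. -/
private lemma sublevel_bound (γ0 : Matrix (Fin n1) (Fin n2) ℝ) (μ1 : Fin n1 → ℝ)
    (μ2 : Fin n2 → ℝ) (hn1 : 0 < n1) (hn2 : 0 < n2) (hγ0 : ∀ i j, 0 < γ0 i j)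
    (hμ1 : ∀ i, 0 < μ1 i) (hμ2 : ∀ j, 0 < μ2 j) (hmass : ∑ i, μ1 i = ∑ j, μ2 j) :
    ∃ R : ℝ, 0 ≤ R ∧ ∀ u v, u ⟨0, hn1⟩ = 0 →
      Gfun γ0 μ1 μ2 (u, v) ≤ ∑ i, ∑ j, γ0 i j →
      (∀ i, |u i| ≤ R) ∧ (∀ j, |v j| ≤ R) := by
  haveI : Nonempty (Fin n1) := Fin.pos_iff_nonempty.mp hn1
  haveI : Nonempty (Fin n2) := Fin.pos_iff_nonempty.mp hn2
  set i0 : Fin n1 := ⟨0, hn1⟩ with hi0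
  set M : ℝ := ∑ i, ∑ j, γ0 i j with hMdef
  have hM : 0 < M := Finset.sum_pos (fun i _ => Finset.sum_pos (fun j _ => hγ0 i j)
    univ_nonempty) univ_nonempty
  set M1 : ℝ := ∑ i, μ1 i with hM1def
  have hM1 : 0 < M1 := Finset.sum_pos (fun i _ => hμ1 i) univ_nonempty
  obtain ⟨pε, -, hpε⟩ := Finset.exists_min_image (univ ×ˢ univ)
    (fun p : Fin n1 × Fin n2 => γ0 p.1 p.2) (by simp [Finset.univ_nonempty])
  set ε := γ0 pε.1 pε.2 with hεdef
  have hε : 0 < ε := hγ0 _ _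
  have hεle : ∀ i j, ε ≤ γ0 i j := fun i j => hpε (i, j) (by simp)
  obtain ⟨im, -, him⟩ := Finset.exists_min_image univ μ1 univ_nonempty
  obtain ⟨jm, -, hjm⟩ := Finset.exists_min_image univ μ2 univ_nonempty
  set μm := min (μ1 im) (μ2 jm) with hμmdef
  have hμm : 0 < μm := lt_min (hμ1 im) (hμ2 jm)
  have hμmle1 : ∀ i, μm ≤ μ1 i := fun i => le_trans (min_le_left _ _) (him i (mem_univ i))
  have hμmle2 : ∀ j, μm ≤ μ2 j := fun j => le_trans (min_le_right _ _) (hjm j (mem_univ j))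
  set c1 : ℝ := (M1 + 1) * Real.log ((M1 + 1) / ε) - (M1 + 1) with hc1def
  set B1' : ℝ := max (M + c1) 0 with hB1'def
  have hB1' : 0 ≤ B1' := le_max_right _ _
  set B3 : ℝ := (M + M1 * B1') / μm with hB3def
  have hB3 : 0 ≤ B3 := div_nonneg (by nlinarith) hμm.le
  set BU : ℝ := B1' + B3 with hBUdef
  have hBU : 0 ≤ BU := by linarith
  set BL : ℝ := (M + M1 * BU + M1 * B1') / μm with hBLdef
  have hBL : 0 ≤ BL := div_nonneg (by nlinarith) hμm.le
  clear_value M M1 ε μm c1 B1' B3 BU BL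
  refine ⟨max BU BL, le_trans hBU (le_max_left _ _), ?_⟩
  intro u v hu0 hG
  simp only [Gfun] at hG
  obtain ⟨iU, -, hiU⟩ := Finset.exists_max_image univ u univ_nonempty
  obtain ⟨jV, -, hjV⟩ := Finset.exists_max_image univ v univ_nonempty
  set U := u iU with hUdef
  set Vm := v jV with hVmdef
  have hU0 : 0 ≤ U := hu0 ▸ hiU i0 (mem_univ i0)
  clear_value U Vm
  set E : ℝ := ∑ i, ∑ j, γ0 i j * Real.exp (u i + v j) with hEdef
  have hE0 : 0 ≤ E := Finset.sum_nonneg fun i _ => Finset.sum_nonneg fun j _ =>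
    le_of_lt (mul_pos (hγ0 i j) (Real.exp_pos _))
  clear_value E
  have hL1 : ∑ i, μ1 i * u i ≤ M1 * U := by
    calc ∑ i, μ1 i * u i ≤ ∑ i, μ1 i * U :=
          Finset.sum_le_sum fun i _ => mul_le_mul_of_nonneg_left (hiU i (mem_univ i)) (hμ1 i).le
      _ = M1 * U := by rw [← Finset.sum_mul, ← hM1def]
  have hL2 : ∑ j, μ2 j * v j ≤ M1 * Vm := by
    calc ∑ j, μ2 j * v j ≤ ∑ j, μ2 j * Vm :=
          Finset.sum_le_sum fun j _ => mul_le_mul_of_nonneg_left (hjV j (mem_univ j)) (hμ2 j).le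
      _ = M1 * Vm := by rw [← Finset.sum_mul, ← hmass]
  have hEt : ε * Real.exp (U + Vm) ≤ E := by
    have h1 : γ0 iU jV * Real.exp (u iU + v jV) ≤ ∑ j, γ0 iU j * Real.exp (u iU + v j) :=
      Finset.single_le_sum (f := fun j => γ0 iU j * Real.exp (u iU + v j))
        (fun j _ => le_of_lt (mul_pos (hγ0 iU j) (Real.exp_pos _))) (mem_univ jV)
    have h2 : (∑ j, γ0 iU j * Real.exp (u iU + v j)) ≤ E := by
      rw [hEdef]
      exact Finset.single_le_sum (f := fun i => ∑ j, γ0 i j * Real.exp (u i + v j))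
        (fun i _ => Finset.sum_nonneg fun j _ => le_of_lt (mul_pos (hγ0 i j) (Real.exp_pos _)))
        (mem_univ iU)
    have h3 : ε * Real.exp (U + Vm) ≤ γ0 iU jV * Real.exp (u iU + v jV) := by
      rw [hUdef, hVmdef]
      exact mul_le_mul_of_nonneg_right (hεle iU jV) (Real.exp_pos _).le
    linarith
  have hT : ε * Real.exp (U + Vm) ≤ M + M1 * U + M1 * Vm := by linarith
  have ht : U + Vm ≤ B1' := by
    have hlb := exp_lin_bound (a := M1 + 1) (by linarith) hε (U + Vm)
    have h5 : U + Vm ≤ M + c1 := by linarith [hlb, hT, hc1def]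
    rw [hB1'def]
    exact le_trans h5 (le_max_left _ _)
  have hVmB1 : Vm ≤ B1' := by linarith
  have hLlow : -M ≤ ∑ i, μ1 i * u i + ∑ j, μ2 j * v j := by linarith
  have hμi0 : μ1 i0 ≤ M1 := by
    rw [hM1def]
    exact Finset.single_le_sum (fun i _ => (hμ1 i).le) (mem_univ i0)
  have hsum_ne : ∑ i, μ1 i * u i ≤ (M1 - μ1 i0) * U := by
    have hsplit : μ1 i0 * u i0 + ∑ i ∈ univ.erase i0, μ1 i * u i = ∑ i, μ1 i * u i :=
      Finset.add_sum_erase univ (fun i => μ1 i * u i) (mem_univ i0)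
    have h2 : ∑ i ∈ univ.erase i0, μ1 i * u i ≤ ∑ i ∈ univ.erase i0, μ1 i * U :=
      Finset.sum_le_sum fun i _ => mul_le_mul_of_nonneg_left (hiU i (mem_univ i)) (hμ1 i).le
    have h3 : ∑ i ∈ univ.erase i0, μ1 i * U = (M1 - μ1 i0) * U := by
      rw [← Finset.sum_mul, Finset.sum_erase_eq_sub (mem_univ i0), ← hM1def]
    have h4 : u i0 = 0 := hu0
    rw [h4, mul_zero, zero_add] at hsplit
    linarith
  have hVlow : -B3 ≤ Vm := by
    have k1 : -M ≤ (M1 - μ1 i0) * U + M1 * Vm := by linarith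
    have k2 : (M1 - μ1 i0) * U ≤ (M1 - μ1 i0) * (B1' - Vm) :=
      mul_le_mul_of_nonneg_left (by linarith) (by linarith)
    have k3 : -(M + M1 * B1') ≤ μ1 i0 * Vm := by
      nlinarith [mul_nonneg (hμ1 i0).le hB1']
    rw [hB3def]
    exact div_trick (c := M + M1 * B1') hμm (hμmle1 i0) (by nlinarith) k3
  have hUB : U ≤ BU := by linarith
  have hlow : ∀ k : Fin n1, -BL ≤ u k := by
    intro k
    have hsplit : μ1 k * u k + ∑ i ∈ univ.erase k, μ1 i * u i = ∑ i, μ1 i * u i :=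
      Finset.add_sum_erase univ (fun i => μ1 i * u i) (mem_univ k)
    have h2 : ∑ i ∈ univ.erase k, μ1 i * u i ≤ ∑ i ∈ univ.erase k, μ1 i * BU :=
      Finset.sum_le_sum fun i _ => mul_le_mul_of_nonneg_left
        (le_trans (hiU i (mem_univ i)) hUB) (hμ1 i).le
    have h3 : ∑ i ∈ univ.erase k, μ1 i * BU = (M1 - μ1 k) * BU := by
      rw [← Finset.sum_mul, Finset.sum_erase_eq_sub (mem_univ k), ← hM1def]
    have h4 : ∑ j, μ2 j * v j ≤ M1 * B1' := by
      have := mul_le_mul_of_nonneg_left hVmB1 hM1.le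
      linarith
    have k3 : -(M + M1 * BU + M1 * B1') ≤ μ1 k * u k := by
      nlinarith [mul_nonneg (hμ1 k).le hBU]
    rw [hBLdef]
    exact div_trick (c := M + M1 * BU + M1 * B1') hμm (hμmle1 k) (by nlinarith) k3
  have hlowv : ∀ k : Fin n2, -BL ≤ v k := by
    intro k
    have hsplit : μ2 k * v k + ∑ j ∈ univ.erase k, μ2 j * v j = ∑ j, μ2 j * v j :=
      Finset.add_sum_erase univ (fun j => μ2 j * v j) (mem_univ k)
    have h2 : ∑ j ∈ univ.erase k, μ2 j * v j ≤ ∑ j ∈ univ.erase k, μ2 j * B1' :=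
      Finset.sum_le_sum fun j _ => mul_le_mul_of_nonneg_left
        (le_trans (hjV j (mem_univ j)) hVmB1) (hμ2 j).le
    have h3 : ∑ j ∈ univ.erase k, μ2 j * B1' = (M1 - μ2 k) * B1' := by
      rw [← Finset.sum_mul, Finset.sum_erase_eq_sub (mem_univ k), ← hmass]
    have h4 : ∑ i, μ1 i * u i ≤ M1 * BU := by
      have := mul_le_mul_of_nonneg_left hUB hM1.le
      linarith
    have k3 : -(M + M1 * BU + M1 * B1') ≤ μ2 k * v k := by
      nlinarith [mul_nonneg (hμ2 k).le hB1']
    rw [hBLdef]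
    exact div_trick (c := M + M1 * BU + M1 * B1') hμm (hμmle2 k) (by nlinarith) k3
  constructor
  · intro i
    rw [abs_le]
    constructor
    · have := hlow i
      have : -BL ≤ u i := this
      have hR : BL ≤ max BU BL := le_max_right _ _
      linarith
    · have := le_trans (hiU i (mem_univ i)) hUB
      exact le_trans this (le_max_left _ _)
  · intro j
    rw [abs_le]
    constructor
    · have := hlowv j
      have hR : BL ≤ max BU BL := le_max_right _ _
      linarith
    · have h1 := le_trans (hjV j (mem_univ j)) hVmB1
      have : B1' ≤ BU := by linarith
      linarith [le_max_left BU BL]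

/-- Existence of the scaling solution. -/
private lemma sinkhorn_exists (γ0 : Matrix (Fin n1) (Fin n2) ℝ) (μ1 : Fin n1 → ℝ)
    (μ2 : Fin n2 → ℝ) (hn1 : 0 < n1) (hn2 : 0 < n2) (hγ0 : ∀ i j, 0 < γ0 i j)
    (hμ1 : ∀ i, 0 < μ1 i) (hμ2 : ∀ j, 0 < μ2 j) (hmass : ∑ i, μ1 i = ∑ j, μ2 j) :
    ∃ u : Fin n1 → ℝ, ∃ v : Fin n2 → ℝ,
      (∀ i, ∑ j, γ0 i j * Real.exp (u i + v j) = μ1 i) ∧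
      (∀ j, ∑ i, γ0 i j * Real.exp (u i + v j) = μ2 j) := by
  haveI : Nonempty (Fin n1) := Fin.pos_iff_nonempty.mp hn1
  haveI : Nonempty (Fin n2) := Fin.pos_iff_nonempty.mp hn2
  set i0 : Fin n1 := ⟨0, hn1⟩ with hi0
  obtain ⟨R, hR0, hRbound⟩ := sublevel_bound γ0 μ1 μ2 hn1 hn2 hγ0 hμ1 hμ2 hmass
  set K : Set ((Fin n1 → ℝ) × (Fin n2 → ℝ)) :=
    (Set.univ.pi fun _ => Set.Icc (-R) R) ×ˢ (Set.univ.pi fun _ => Set.Icc (-R) R) with hK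
  set V : Set ((Fin n1 → ℝ) × (Fin n2 → ℝ)) := {p | p.1 i0 = 0} with hV
  have hKcomp : IsCompact K :=
    (isCompact_univ_pi fun _ => isCompact_Icc).prod (isCompact_univ_pi fun _ => isCompact_Icc)
  have hVclosed : IsClosed V := isClosed_eq (by fun_prop) continuous_const
  have hCcomp : IsCompact (K ∩ V) := hKcomp.inter_right hVclosed
  have h0K : ((0, 0) : (Fin n1 → ℝ) × (Fin n2 → ℝ)) ∈ K ∩ V := by
    refine ⟨⟨?_, ?_⟩, ?_⟩
    · intro i _; exact Set.mem_Icc.mpr ⟨by simpa using neg_nonpos.mpr hR0, by simpa using hR0⟩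
    · intro j _; exact Set.mem_Icc.mpr ⟨by simpa using neg_nonpos.mpr hR0, by simpa using hR0⟩
    · simp [hV]
  obtain ⟨p, hpC, hpmin⟩ := hCcomp.exists_isMinOn ⟨(0, 0), h0K⟩
    ((Gfun_continuous γ0 μ1 μ2).continuousOn)
  have hG00 : Gfun γ0 μ1 μ2 (0, 0) = ∑ i, ∑ j, γ0 i j := by
    simp [Gfun]
  have hp0 : p.1 i0 = 0 := hpC.2
  have hpM : Gfun γ0 μ1 μ2 p ≤ ∑ i, ∑ j, γ0 i j := by
    have h : Gfun γ0 μ1 μ2 p ≤ Gfun γ0 μ1 μ2 (0, 0) := hpmin h0K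
    rw [hG00] at h
    exact h
  have hminV : ∀ q : (Fin n1 → ℝ) × (Fin n2 → ℝ), q.1 i0 = 0 →
      Gfun γ0 μ1 μ2 p ≤ Gfun γ0 μ1 μ2 q := by
    intro q hq
    by_cases hle : Gfun γ0 μ1 μ2 q ≤ ∑ i, ∑ j, γ0 i j
    · have hb := hRbound q.1 q.2 hq (by simpa using hle)
      have hmem : q ∈ K ∩ V := by
        refine ⟨⟨?_, ?_⟩, hq⟩
        · intro i _; exact Set.mem_Icc.mpr (abs_le.mp (hb.1 i))
        · intro j _; exact Set.mem_Icc.mpr (abs_le.mp (hb.2 j))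
      exact hpmin hmem
    · push_neg at hle
      exact le_trans hpM hle.le
  obtain ⟨u, v⟩ := p
  have hp0' : u i0 = 0 := hp0
  have hrow : ∀ i, i ≠ i0 → ∑ j, γ0 i j * Real.exp (u i + v j) = μ1 i := by
    intro i hi
    apply row_condition γ0 μ1 μ2 hγ0 hn2 u v i (hμ1 i)
    apply hminV
    show Function.update u i _ i0 = 0
    rw [Function.update_of_ne (Ne.symm hi) _ u]
    exact hp0'
  have hcol : ∀ j, ∑ i, γ0 i j * Real.exp (u i + v j) = μ2 j := by
    intro j
    have hc := row_condition γ0.transpose μ2 μ1 (fun j i => hγ0 i j) hn1 v u j (hμ2 j) ?_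
    · rw [← hc]
      exact Finset.sum_congr rfl fun i _ => by rw [Matrix.transpose_apply, add_comm]
    · rw [← Gfun_swap γ0 μ1 μ2 u v,
        Gfun_swap γ0.transpose μ2 μ1 (Function.update v j
          (Real.log (μ2 j / ∑ i, γ0.transpose j i * Real.exp (u i)))) u,
        Matrix.transpose_transpose]
      exact hminV _ hp0'
  have hrow0 : ∑ j, γ0 i0 j * Real.exp (u i0 + v j) = μ1 i0 := by
    have htot : ∑ i, ∑ j, γ0 i j * Real.exp (u i + v j) = ∑ i, μ1 i := by
      rw [Finset.sum_comm]
      calc ∑ j, ∑ i, γ0 i j * Real.exp (u i + v j) = ∑ j, μ2 j :=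
            Finset.sum_congr rfl fun j _ => hcol j
        _ = ∑ i, μ1 i := hmass.symm
    have hsplit : (∑ j, γ0 i0 j * Real.exp (u i0 + v j))
          + ∑ i ∈ univ.erase i0, ∑ j, γ0 i j * Real.exp (u i + v j)
        = ∑ i, ∑ j, γ0 i j * Real.exp (u i + v j) :=
      Finset.add_sum_erase univ (fun i => ∑ j, γ0 i j * Real.exp (u i + v j)) (mem_univ i0)
    have hsplit2 : μ1 i0 + ∑ i ∈ univ.erase i0, μ1 i = ∑ i, μ1 i :=
      Finset.add_sum_erase univ μ1 (mem_univ i0)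
    have herase : ∑ i ∈ univ.erase i0, ∑ j, γ0 i j * Real.exp (u i + v j)
        = ∑ i ∈ univ.erase i0, μ1 i :=
      Finset.sum_congr rfl fun i hi => hrow i (Finset.ne_of_mem_erase hi)
    linarith [htot, hsplit, hsplit2, herase]
  refine ⟨u, v, fun i => ?_, hcol⟩
  rcases eq_or_ne i i0 with rfl | hi
  · exact hrow0
  · exact hrow i hi

/-- Uniqueness of the scaled matrix. -/
private lemma sinkhorn_unique (γ0 : Matrix (Fin n1) (Fin n2) ℝ) (μ1 : Fin n1 → ℝ)
    (μ2 : Fin n2 → ℝ) (hγ0 : ∀ i j, 0 < γ0 i j)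
    (a a' : Fin n1 → ℝ) (b b' : Fin n2 → ℝ)
    (ha : ∀ i, 0 < a i) (hb : ∀ j, 0 < b j) (ha' : ∀ i, 0 < a' i) (hb' : ∀ j, 0 < b' j)
    (hr : ∀ i, ∑ j, a i * γ0 i j * b j = μ1 i)
    (hc : ∀ j, ∑ i, a i * γ0 i j * b j = μ2 j)
    (hr' : ∀ i, ∑ j, a' i * γ0 i j * b' j = μ1 i)
    (hc' : ∀ j, ∑ i, a' i * γ0 i j * b' j = μ2 j) :
    ∀ i j, a' i * γ0 i j * b' j = a i * γ0 i j * b j := by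
  set γ : Fin n1 → Fin n2 → ℝ := fun i j => a i * γ0 i j * b j with hγ
  set γ' : Fin n1 → Fin n2 → ℝ := fun i j => a' i * γ0 i j * b' j with hγ'
  set d : Fin n1 → ℝ := fun i => Real.log (a' i / a i) with hd
  set e : Fin n2 → ℝ := fun j => Real.log (b' j / b j) with he
  have hγpos : ∀ i j, 0 < γ i j := fun i j => by
    exact mul_pos (mul_pos (ha i) (hγ0 i j)) (hb j)
  have hγ'pos : ∀ i j, 0 < γ' i j := fun i j => by
    exact mul_pos (mul_pos (ha' i) (hγ0 i j)) (hb' j)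
  have hexp : ∀ i j, γ' i j = γ i j * Real.exp (d i + e j) := by
    intro i j
    rw [Real.exp_add, Real.exp_log (div_pos (ha' i) (ha i)),
      Real.exp_log (div_pos (hb' j) (hb j))]
    have h1 : a i ≠ 0 := (ha i).ne'
    have h2 : b j ≠ 0 := (hb j).ne'
    field_simp [hγ, hγ']
    ring
  -- each summand nonneg
  set F : Fin n1 → Fin n2 → ℝ := fun i j =>
    γ i j * (Real.exp (d i + e j) - 1 - (d i + e j))
      + γ' i j * (Real.exp (-(d i + e j)) - 1 + (d i + e j)) with hF
  have hFnn : ∀ i j, 0 ≤ F i j := by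
    intro i j
    have k1 := Real.add_one_le_exp (d i + e j)
    have k2 := Real.add_one_le_exp (-(d i + e j))
    have := (hγpos i j).le
    have := (hγ'pos i j).le
    simp only [hF]
    nlinarith [(hγpos i j).le, (hγ'pos i j).le, k1, k2]
  -- total sum equals zero
  have hsum : ∑ i, ∑ j, F i j = 0 := by
    have hterm : ∀ i j, F i j = (γ' i j - γ i j) * (d i + e j) := by
      intro i j
      have h1 := hexp i j
      have h2 : γ i j = γ' i j * Real.exp (-(d i + e j)) := by
        rw [h1, mul_assoc, ← Real.exp_add, add_neg_cancel, Real.exp_zero, mul_one]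
      simp only [hF]
      nlinarith [h1, h2]
    have e1 : ∑ i, ∑ j, (γ' i j - γ i j) * d i = 0 := by
      apply Finset.sum_eq_zero; intro i _
      rw [← Finset.sum_mul, Finset.sum_sub_distrib]
      have h1 : ∑ j, γ' i j = μ1 i := hr' i
      have h2 : ∑ j, γ i j = μ1 i := hr i
      rw [h1, h2, sub_self, zero_mul]
    have e2 : ∑ i, ∑ j, (γ' i j - γ i j) * e j = 0 := by
      rw [Finset.sum_comm]
      apply Finset.sum_eq_zero; intro j _
      rw [← Finset.sum_mul, Finset.sum_sub_distrib]
      have h1 : ∑ i, γ' i j = μ2 j := hc' j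
      have h2 : ∑ i, γ i j = μ2 j := hc j
      rw [h1, h2, sub_self, zero_mul]
    calc ∑ i, ∑ j, F i j
        = ∑ i, ∑ j, ((γ' i j - γ i j) * d i + (γ' i j - γ i j) * e j) := by
          exact Finset.sum_congr rfl fun i _ => Finset.sum_congr rfl fun j _ => by
            rw [hterm i j]; ring
      _ = (∑ i, ∑ j, (γ' i j - γ i j) * d i) + ∑ i, ∑ j, (γ' i j - γ i j) * e j := by
          rw [← Finset.sum_add_distrib]
          exact Finset.sum_congr rfl fun i _ => Finset.sum_add_distrib
      _ = 0 := by rw [e1, e2, add_zero]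
  have hFzero : ∀ i j, F i j = 0 := by
    intro i j
    have h := (Finset.sum_eq_zero_iff_of_nonneg
      (fun i _ => Finset.sum_nonneg fun j _ => hFnn i j)).mp hsum i (mem_univ i)
    exact (Finset.sum_eq_zero_iff_of_nonneg (fun j _ => hFnn i j)).mp h j (mem_univ j)
  intro i j
  have hF0 := hFzero i j
  have k1 := Real.add_one_le_exp (d i + e j)
  have k2 := Real.add_one_le_exp (-(d i + e j))
  have hx : Real.exp (d i + e j) ≤ 1 + (d i + e j) := by
    simp only [hF] at hF0
    nlinarith [hγpos i j, hγ'pos i j]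
  have h0 : d i + e j = 0 := eq_zero_of_exp_le hx
  have := hexp i j
  rw [h0] at this
  simpa using this

end SinkhornAux

theorem stmt_3 (n1 n2 : ℕ) (hn1 : 0 < n1) (hn2 : 0 < n2)
    (γ0 : Matrix (Fin n1) (Fin n2) ℝ) (hγ0 : ∀ i j, 0 < γ0 i j)
    (μ1 : Fin n1 → ℝ) (μ2 : Fin n2 → ℝ)
    (hμ1 : ∀ i, 0 < μ1 i) (hμ2 : ∀ j, 0 < μ2 j)
    (hmass : ∑ i, μ1 i = ∑ j, μ2 j) :
    ∃! γ : Matrix (Fin n1) (Fin n2) ℝ,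
      (∃ a : Fin n1 → ℝ, ∃ b : Fin n2 → ℝ, (∀ i, 0 < a i) ∧ (∀ j, 0 < b j) ∧
        γ = Matrix.of fun i j => a i * γ0 i j * b j) ∧
      (∀ i, ∑ j, γ i j = μ1 i) ∧ (∀ j, ∑ i, γ i j = μ2 j) := by
  obtain ⟨u, v, hu, hv⟩ := sinkhorn_exists γ0 μ1 μ2 hn1 hn2 hγ0 hμ1 hμ2 hmass
  refine ⟨Matrix.of fun i j => Real.exp (u i) * γ0 i j * Real.exp (v j), ⟨⟨_, _,
    fun i => Real.exp_pos _, fun j => Real.exp_pos _, rfl⟩, ?_, ?_⟩, ?_⟩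
  · intro i
    rw [← hu i]
    exact Finset.sum_congr rfl fun j _ => by simp [Matrix.of_apply, Real.exp_add]; ring
  · intro j
    rw [← hv j]
    exact Finset.sum_congr rfl fun i _ => by simp [Matrix.of_apply, Real.exp_add]; ring
  · rintro γ' ⟨⟨a', b', ha', hb', rfl⟩, hr', hc'⟩
    have hr : ∀ i, ∑ j, Real.exp (u i) * γ0 i j * Real.exp (v j) = μ1 i := by
      intro i; rw [← hu i]
      exact Finset.sum_congr rfl fun j _ => by rw [Real.exp_add]; ring
    have hc : ∀ j, ∑ i, Real.exp (u i) * γ0 i j * Real.exp (v j) = μ2 j := by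
      intro j; rw [← hv j]
      exact Finset.sum_congr rfl fun i _ => by rw [Real.exp_add]; ring
    have := sinkhorn_unique γ0 μ1 μ2 hγ0 (fun i => Real.exp (u i)) a'
      (fun j => Real.exp (v j)) b' (fun i => Real.exp_pos _) (fun j => Real.exp_pos _)
      ha' hb' hr hc (fun i => by simpa using hr' i) (fun j => by simpa using hc' j)
    ext i j
    exact this i j
end

section
/- Let n1, n2 be positive integers, let μ1 ∈ ℝ^{n1}, μ2 ∈ ℝ^{n2} have strictly positive entries with Σ_i μ1_i = Σ_j μ2_j, and let γ0 ∈ ℝ^{n1×n2} have strictly positive entries. Let γ* be the unique matrix in S ∩ C1 ∩ C2, where S = { diag(a)·γ0·diag(b) : a, b entrywise positive }, and set F(γ) = KL(γ*, γ). Let θ1 and θ2 be continuous real-valued functions on the set of entrywise positive n1×n2 matrices such that for k = 1, 2 and every entrywise positive γ: F(P^{θk(γ)}_{Ck}(γ)) ≤ F(γ), with strict inequality whenever γ ∉ Ck. Define the sequence γ^0 = γ0, γ̃^{ℓ+1} = P^{θ1(γ^ℓ)}_{C1}(γ^ℓ), γ^{ℓ+1} = P^{θ2(γ̃^{ℓ+1})}_{C2}(γ̃^{ℓ+1}).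 Then the sequence (γ^ℓ) converges to γ*. -/
open scoped BigOperators

/-- The ω-overrelaxed projection onto `C2 = {γ : A2 γ = μ2}`. -/
noncomputable def P2 {n1 n2 : ℕ} (μ2 : Fin n2 → ℝ) (ω : ℝ)
    (γ : Matrix (Fin n1) (Fin n2) ℝ) : Matrix (Fin n1) (Fin n2) ℝ :=
  Matrix.of fun i j => γ i j * (μ2 j / ∑ i', γ i' j) ^ ω

/-!
Along the iteration `F = KL(γ*, ·)` decreases, hence converges, and the iterates stay in a
sublevel set of `F`, which is a compact set of entrywise positive matrices. At a cluster point
`x`, both `F` and `F ∘ P^{θ1}_{C1}` equal the limit of `F`, so strict descent forces `x ∈ C1`;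
then `x` is fixed by the first projection and the same squeeze gives `x ∈ C2`. Every iterate is
a diagonal scaling of `γ0`, and so is `x`, because scalings are exactly the positive matrices
with the cross ratios of `γ0`. Thus `x ∈ S ∩ C1 ∩ C2 = {γ*}`, and a sequence in a compact set
with a single cluster point converges to it.
-/

open Filter Topology InformationTheory

lemma MapClusterPt.eq_of_tendsto {α X : Type*} [TopologicalSpace X] [T2Space X]
    {l : Filter α} {u : α → X} {x y : X} (hx : MapClusterPt x l u) (hu : Tendsto u l (𝓝 y)) :
    x = y := by
  by_contra hne
  exact (hx.clusterPt.mono hu).ne (disjoint_iff.mp (disjoint_nhds_nhds.mpr hne))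

lemma MapClusterPt.mem_closure {α X : Type*} [TopologicalSpace X] {l : Filter α} {u : α → X}
    {x : X} {s : Set X} (hx : MapClusterPt x l u) (hu : ∀ᶠ a in l, u a ∈ s) : x ∈ closure s :=
  hx.clusterPt.mem_closure_of_mem s hu

lemma mem_of_mapClusterPt_of_descent {X : Type*} [TopologicalSpace X] {F : X → ℝ} {T : X → X}
    {C : Set X} {u : ℕ → X} {x : X} {L : ℝ} (hFu : Tendsto (fun n => F (u n)) atTop (𝓝 L))
    (hx : MapClusterPt x atTop u) (hF : ContinuousAt F x)
    (hFT : ContinuousAt (fun y => F (T y)) x)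
    (hle : ∀ n, F (u (n + 1)) ≤ F (T (u n))) (hge : ∀ n, F (T (u n)) ≤ F (u n))
    (hstrict : x ∉ C → F (T x) < F x) : x ∈ C := by
  have hFx : F x = L := (hx.continuousAt_comp hF).eq_of_tendsto hFu
  have hFTu : Tendsto (fun n => F (T (u n))) atTop (𝓝 L) :=
    tendsto_of_tendsto_of_tendsto_of_le_of_le ((tendsto_add_atTop_iff_nat 1).mpr hFu) hFu
      hle hge
  have hFTx : F (T x) = L := (hx.continuousAt_comp hFT).eq_of_tendsto hFTu
  by_contra hxC
  exact (hstrict hxC).ne (hFTx.trans hFx.symm)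

lemma mem_inter_of_mapClusterPt_of_alternating_descent {X : Type*} [TopologicalSpace X]
    {U C1 C2 : Set X} {F : X → ℝ} {T1 T2 : X → X} {u : ℕ → X} {x : X} {L : ℝ}
    (hF : ∀ y ∈ U, ContinuousAt F y) (hT1 : ∀ y ∈ U, T1 y ∈ U ∧ ContinuousAt T1 y)
    (hT2 : ∀ y ∈ U, T2 y ∈ U ∧ ContinuousAt T2 y)
    (hd1 : ∀ y ∈ U, F (T1 y) ≤ F y) (hd2 : ∀ y ∈ U, F (T2 y) ≤ F y)
    (hs1 : ∀ y ∈ U, y ∉ C1 → F (T1 y) < F y) (hs2 : ∀ y ∈ U, y ∉ C2 → F (T2 y) < F y)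
    (hfix : ∀ y ∈ C1, T1 y = y) (hu : ∀ n, u n ∈ U) (hrec : ∀ n, u (n + 1) = T2 (T1 (u n)))
    (hFu : Tendsto (fun n => F (u n)) atTop (𝓝 L)) (hx : MapClusterPt x atTop u)
    (hxU : x ∈ U) : x ∈ C1 ∩ C2 := by
  obtain ⟨hT1xU, hT1x⟩ := hT1 x hxU
  obtain ⟨hT2xU, hT2x⟩ := hT2 _ hT1xU
  have hstep n : F (u (n + 1)) ≤ F (T1 (u n)) := hrec n ▸ hd2 _ (hT1 _ (hu n)).1
  have hx1 : x ∈ C1 := mem_of_mapClusterPt_of_descent hFu hx (hF x hxU)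
    ((hF _ hT1xU).comp hT1x) hstep (fun n => hd1 _ (hu n)) (hs1 x hxU)
  have hx2 : x ∈ C2 := mem_of_mapClusterPt_of_descent (T := T2 ∘ T1) hFu hx (hF x hxU)
    ((hF _ hT2xU).comp_of_eq (hT2x.comp hT1x) rfl) (fun n => (congrArg F (hrec n)).le)
    (fun n => (hrec n ▸ hstep n).trans (hd1 _ (hu n)))
    (fun h => by simpa only [Function.comp_apply, hfix x hx1] using hs2 x hxU h)
  exact ⟨hx1, hx2⟩

lemma Real.sub_one_mul_log_nonneg {t : ℝ} (ht : 0 < t) : 0 ≤ (t - 1) * Real.log t := by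
  rcases le_total t 1 with h | h
  · exact mul_nonneg_of_nonpos_of_nonpos (by linarith) (Real.log_nonpos ht.le h)
  · exact mul_nonneg (by linarith) (Real.log_nonneg h)

lemma Real.sub_one_mul_log_eq_zero_iff {t : ℝ} (ht : 0 < t) :
    (t - 1) * Real.log t = 0 ↔ t = 1 := by
  refine ⟨fun h => ?_, fun h => by simp [h]⟩
  rcases mul_eq_zero.mp h with h | h
  · linarith
  · exact Real.eq_one_of_pos_of_log_eq_zero ht h

lemma Real.log_le_div_two {y : ℝ} (hy : 0 < y) : Real.log y ≤ y / 2 := by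
  have h := Real.log_le_sub_one_of_pos (half_pos hy)
  rw [Real.log_div hy.ne' two_ne_zero] at h
  linarith [Real.log_two_lt_d9]

lemma isOpen_setOf_forall_pos {m n : Type*} [Finite m] [Finite n] :
    IsOpen {γ : Matrix m n ℝ | ∀ i j, 0 < γ i j} := by
  simp only [Set.ofPred_forall]
  exact isOpen_iInter_of_finite fun i => isOpen_iInter_of_finite fun j =>
    isOpen_lt continuous_const (by fun_prop)

section DiagScaling

variable {m n : Type*}

/-- `γ` lies in `S = {diag(a) γ0 diag(b) : a, b > 0}`. -/
def IsDiagScaling (γ0 γ : Matrix m n ℝ) : Prop :=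
  ∃ a : m → ℝ, ∃ b : n → ℝ, (∀ i, 0 < a i) ∧ (∀ j, 0 < b j) ∧
    γ = Matrix.of fun i j => a i * γ0 i j * b j

namespace IsDiagScaling

variable {γ0 γ γ' : Matrix m n ℝ}

lemma refl (γ : Matrix m n ℝ) : IsDiagScaling γ γ :=
  ⟨1, 1, fun _ => one_pos, fun _ => one_pos, by ext; simp⟩

lemma symm (h : IsDiagScaling γ0 γ) : IsDiagScaling γ γ0 := by
  obtain ⟨a, b, ha, hb, rfl⟩ := h
  refine ⟨fun i => (a i)⁻¹, fun j => (b j)⁻¹, fun i => inv_pos.mpr (ha i),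
    fun j => inv_pos.mpr (hb j), ?_⟩
  ext i j
  simp only [Matrix.of_apply]
  field_simp [(ha i).ne', (hb j).ne']

lemma trans (h : IsDiagScaling γ0 γ) (h' : IsDiagScaling γ γ') : IsDiagScaling γ0 γ' := by
  obtain ⟨a, b, ha, hb, rfl⟩ := h
  obtain ⟨a', b', ha', hb', rfl⟩ := h'
  refine ⟨fun i => a' i * a i, fun j => b j * b' j, fun i => mul_pos (ha' i) (ha i),
    fun j => mul_pos (hb j) (hb' j), ?_⟩
  ext i j
  simp only [Matrix.of_apply]
  ring

lemma pos (h : IsDiagScaling γ0 γ) (hγ0 : ∀ i j, 0 < γ0 i j) : ∀ i j, 0 < γ i j := by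
  obtain ⟨a, b, ha, hb, rfl⟩ := h
  intro i j
  exact mul_pos (mul_pos (ha i) (hγ0 i j)) (hb j)

lemma cross_mul_eq (h : IsDiagScaling γ0 γ) (i i' : m) (j j' : n) :
    γ i j * γ i' j' * (γ0 i j' * γ0 i' j) = γ i j' * γ i' j * (γ0 i j * γ0 i' j') := by
  obtain ⟨a, b, ha, hb, rfl⟩ := h
  simp only [Matrix.of_apply]
  ring

lemma of_cross_mul_eq [Nonempty m] [Nonempty n] (hγ0 : ∀ i j, 0 < γ0 i j)
    (hγ : ∀ i j, 0 < γ i j)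
    (h : ∀ i i' j j',
      γ i j * γ i' j' * (γ0 i j' * γ0 i' j) = γ i j' * γ i' j * (γ0 i j * γ0 i' j')) :
    IsDiagScaling γ0 γ := by
  obtain ⟨i0⟩ := ‹Nonempty m›
  obtain ⟨j0⟩ := ‹Nonempty n›
  refine ⟨fun i => γ i j0 / γ0 i j0, fun j => γ i0 j * γ0 i0 j0 / (γ0 i0 j * γ i0 j0),
    fun i => div_pos (hγ i j0) (hγ0 i j0),
    fun j => div_pos (mul_pos (hγ i0 j) (hγ0 i0 j0)) (mul_pos (hγ0 i0 j) (hγ i0 j0)), ?_⟩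
  ext i j
  simp only [Matrix.of_apply]
  field_simp [(hγ0 i j0).ne', (hγ0 i0 j).ne', (hγ i0 j0).ne']
  linear_combination h i i0 j j0

lemma of_mem_closure [Nonempty m] [Nonempty n] (hγ0 : ∀ i j, 0 < γ0 i j)
    (hγ : ∀ i j, 0 < γ i j) (h : γ ∈ closure {γ' | IsDiagScaling γ0 γ'}) :
    IsDiagScaling γ0 γ := by
  have hclosed : IsClosed {γ' : Matrix m n ℝ | ∀ i i' j j',
      γ' i j * γ' i' j' * (γ0 i j' * γ0 i' j) = γ' i j' * γ' i' j * (γ0 i j * γ0 i' j')} := by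
    simp only [Set.ofPred_forall]
    exact isClosed_iInter fun i => isClosed_iInter fun i' => isClosed_iInter fun j =>
      isClosed_iInter fun j' => isClosed_eq (by fun_prop) (by fun_prop)
  exact of_cross_mul_eq hγ0 hγ
    (closure_minimal (fun γ' hγ' => cross_mul_eq hγ') hclosed h)

/-- With `γ = diag(a) γ' diag(b)`, the pairing of `γ - γ'` with `log a_i + log b_j` vanishes by
the marginal constraints, while each of its terms `γ'_ij (a_i b_j - 1) log (a_i b_j)` is
nonnegative. -/
lemma eq_of_sum_eq [Fintype m] [Fintype n] (h : IsDiagScaling γ' γ) (hγ' : ∀ i j, 0 ≤ γ' i j)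
    (hrow : ∀ i, ∑ j, γ i j = ∑ j, γ' i j) (hcol : ∀ j, ∑ i, γ i j = ∑ i, γ' i j) : γ = γ' := by
  obtain ⟨a, b, ha, hb, rfl⟩ := h
  simp only [Matrix.of_apply] at hrow hcol
  have hab : ∀ i j, 0 < a i * b j := fun i j => mul_pos (ha i) (hb j)
  have hterm : ∀ i j, γ' i j * ((a i * b j - 1) * Real.log (a i * b j)) =
      (a i * γ' i j * b j - γ' i j) * Real.log (a i) +
        (a i * γ' i j * b j - γ' i j) * Real.log (b j) := fun i j => by
    rw [Real.log_mul (ha i).ne' (hb j).ne']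
    ring
  have hsum : ∑ i, ∑ j, γ' i j * ((a i * b j - 1) * Real.log (a i * b j)) = 0 := by
    simp only [hterm, Finset.sum_add_distrib, ← Finset.sum_mul]
    rw [Finset.sum_comm (f := fun i j => (a i * γ' i j * b j - γ' i j) * Real.log (b j))]
    simp only [← Finset.sum_mul, Finset.sum_sub_distrib, hrow, hcol, sub_self, zero_mul,
      Finset.sum_const_zero, add_zero]
  have hnonneg : ∀ i j, 0 ≤ γ' i j * ((a i * b j - 1) * Real.log (a i * b j)) := fun i j =>
    mul_nonneg (hγ' i j) (Real.sub_one_mul_log_nonneg (hab i j))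
  ext i j
  have hij := (Finset.sum_eq_zero_iff_of_nonneg fun j _ => hnonneg i j).mp
    ((Finset.sum_eq_zero_iff_of_nonneg fun i _ => Finset.sum_nonneg fun j _ => hnonneg i j).mp
      hsum i (Finset.mem_univ i)) j (Finset.mem_univ j)
  rcases mul_eq_zero.mp hij with h0 | h1
  · simp [h0]
  · have := (Real.sub_one_mul_log_eq_zero_iff (hab i j)).mp h1
    simp only [Matrix.of_apply]
    linear_combination γ' i j * this

end IsDiagScaling

end DiagScaling

section Sinkhorn

variable {n1 n2 : ℕ}

lemma KL_eq_sum_mul_klFun (ξ : Matrix (Fin n1) (Fin n2) ℝ) {γ : Matrix (Fin n1) (Fin n2) ℝ}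
    (hγ : ∀ i j, γ i j ≠ 0) : KL ξ γ = ∑ i, ∑ j, γ i j * klFun (ξ i j / γ i j) := by
  simp only [KL, ← Finset.sum_add_distrib, klFun]
  refine Finset.sum_congr rfl fun i _ => Finset.sum_congr rfl fun j _ => ?_
  field_simp [hγ i j]
  ring

lemma mul_klFun_le_KL {ξ γ : Matrix (Fin n1) (Fin n2) ℝ} (hξ : ∀ i j, 0 ≤ ξ i j)
    (hγ : ∀ i j, 0 < γ i j) (i : Fin n1) (j : Fin n2) :
    γ i j * klFun (ξ i j / γ i j) ≤ KL ξ γ := by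
  have hnonneg : ∀ i j, 0 ≤ γ i j * klFun (ξ i j / γ i j) := fun i j =>
    mul_nonneg (hγ i j).le (klFun_nonneg (div_nonneg (hξ i j) (hγ i j).le))
  rw [KL_eq_sum_mul_klFun ξ fun i j => (hγ i j).ne']
  exact (Finset.single_le_sum (fun j _ => hnonneg i j) (Finset.mem_univ j)).trans
    (Finset.single_le_sum (fun i _ => Finset.sum_nonneg fun j _ => hnonneg i j)
      (Finset.mem_univ i))

lemma KL_nonneg {ξ γ : Matrix (Fin n1) (Fin n2) ℝ} (hξ : ∀ i j, 0 ≤ ξ i j)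
    (hγ : ∀ i j, 0 < γ i j) : 0 ≤ KL ξ γ := by
  rw [KL_eq_sum_mul_klFun ξ fun i j => (hγ i j).ne']
  exact Finset.sum_nonneg fun i _ => Finset.sum_nonneg fun j _ =>
    mul_nonneg (hγ i j).le (klFun_nonneg (div_nonneg (hξ i j) (hγ i j).le))

lemma mem_Icc_of_mul_klFun_le {a t c : ℝ} (ha : 0 < a) (ht : 0 < t)
    (h : t * klFun (a / t) ≤ c) : t ∈ Set.Icc (a / Real.exp ((c + a) / a)) (2 * (c + a)) := by
  have hkl : t * klFun (a / t) = a * Real.log (a / t) + t - a := by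
    simp only [klFun]
    field_simp
  rw [hkl] at h
  constructor
  · rw [div_le_iff₀ (Real.exp_pos _), ← div_le_iff₀' ht,
      ← Real.log_le_iff_le_exp (by positivity), le_div_iff₀ ha]
    linarith
  · have hlog : a * Real.log (t / a) ≤ t / 2 := by
      have := mul_le_mul_of_nonneg_left (Real.log_le_div_two (div_pos ht ha)) ha.le
      rwa [show a * (t / a / 2) = t / 2 by field_simp] at this
    rw [Real.log_div ha.ne' ht.ne'] at h
    rw [Real.log_div ht.ne' ha.ne'] at hlog
    linarith

lemma exists_isCompact_of_KL_le {ξ : Matrix (Fin n1) (Fin n2) ℝ} (hξ : ∀ i j, 0 < ξ i j)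
    (c : ℝ) : ∃ K : Set (Matrix (Fin n1) (Fin n2) ℝ), IsCompact K ∧
      (∀ γ ∈ K, ∀ i j, 0 < γ i j) ∧ ∀ γ, (∀ i j, 0 < γ i j) → KL ξ γ ≤ c → γ ∈ K := by
  refine ⟨Set.univ.pi fun i => Set.univ.pi fun j =>
      Set.Icc (ξ i j / Real.exp ((c + ξ i j) / ξ i j)) (2 * (c + ξ i j)),
    isCompact_univ_pi fun i => isCompact_univ_pi fun j => isCompact_Icc,
    fun γ hγ i j => lt_of_lt_of_le (by have := hξ i j; positivity) (hγ i trivial j trivial).1,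
    fun γ hγ hc i _ j _ => ?_⟩
  exact mem_Icc_of_mul_klFun_le (hξ i j) (hγ i j)
    ((mul_klFun_le_KL (fun i j => (hξ i j).le) hγ i j).trans hc)

lemma continuousAt_KL {ξ x : Matrix (Fin n1) (Fin n2) ℝ} (hξ : ∀ i j, ξ i j ≠ 0)
    (hx : ∀ i j, x i j ≠ 0) : ContinuousAt (KL ξ) x := by
  have hterm : ∀ i j, ContinuousAt
      (fun γ : Matrix (Fin n1) (Fin n2) ℝ => ξ i j * (Real.log (ξ i j / γ i j) - 1)) x :=
    fun i j => continuousAt_const.mul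
      (((continuousAt_const.div (continuous_apply_apply i j).continuousAt (hx i j)).log
        (div_ne_zero (hξ i j) (hx i j))).sub continuousAt_const)
  exact (tendsto_finsetSum _ fun i _ => tendsto_finsetSum _ fun j _ => hterm i j).add
    (by fun_prop : Continuous fun γ : Matrix (Fin n1) (Fin n2) ℝ =>
      ∑ i, ∑ j, γ i j).continuousAt

lemma isDiagScaling_P1 [Nonempty (Fin n2)] {μ1 : Fin n1 → ℝ} (ω : ℝ)
    {γ : Matrix (Fin n1) (Fin n2) ℝ} (hμ1 : ∀ i, 0 < μ1 i) (hγ : ∀ i j, 0 < γ i j) :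
    IsDiagScaling γ (P1 μ1 ω γ) := by
  refine ⟨fun i => (μ1 i / ∑ j, γ i j) ^ ω, 1,
    fun i => Real.rpow_pos_of_pos (div_pos (hμ1 i) (Finset.sum_pos (fun j _ => hγ i j)
      Finset.univ_nonempty)) ω, fun _ => one_pos, ?_⟩
  ext i j
  simp only [P1, Matrix.of_apply, Pi.one_apply]
  ring

lemma isDiagScaling_P2 [Nonempty (Fin n1)] {μ2 : Fin n2 → ℝ} (ω : ℝ)
    {γ : Matrix (Fin n1) (Fin n2) ℝ} (hμ2 : ∀ j, 0 < μ2 j) (hγ : ∀ i j, 0 < γ i j) :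
    IsDiagScaling γ (P2 μ2 ω γ) := by
  refine ⟨1, fun j => (μ2 j / ∑ i, γ i j) ^ ω, fun _ => one_pos,
    fun j => Real.rpow_pos_of_pos (div_pos (hμ2 j) (Finset.sum_pos (fun i _ => hγ i j)
      Finset.univ_nonempty)) ω, ?_⟩
  ext i j
  simp only [P2, Matrix.of_apply, Pi.one_apply]
  ring

lemma P1_pos [Nonempty (Fin n2)] {μ1 : Fin n1 → ℝ} (ω : ℝ) {γ : Matrix (Fin n1) (Fin n2) ℝ}
    (hμ1 : ∀ i, 0 < μ1 i) (hγ : ∀ i j, 0 < γ i j) : ∀ i j, 0 < P1 μ1 ω γ i j :=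
  (isDiagScaling_P1 ω hμ1 hγ).pos hγ

lemma P2_pos [Nonempty (Fin n1)] {μ2 : Fin n2 → ℝ} (ω : ℝ) {γ : Matrix (Fin n1) (Fin n2) ℝ}
    (hμ2 : ∀ j, 0 < μ2 j) (hγ : ∀ i j, 0 < γ i j) : ∀ i j, 0 < P2 μ2 ω γ i j :=
  (isDiagScaling_P2 ω hμ2 hγ).pos hγ

lemma P1_eq_self {μ1 : Fin n1 → ℝ} (ω : ℝ) {γ : Matrix (Fin n1) (Fin n2) ℝ}
    (hμ1 : ∀ i, μ1 i ≠ 0) (h : ∀ i, ∑ j, γ i j = μ1 i) : P1 μ1 ω γ = γ := by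
  ext i j
  simp [P1, h i, hμ1 i]

lemma continuousAt_P1 [Nonempty (Fin n2)] {μ1 : Fin n1 → ℝ}
    {θ : Matrix (Fin n1) (Fin n2) ℝ → ℝ} {x : Matrix (Fin n1) (Fin n2) ℝ}
    (hμ1 : ∀ i, μ1 i ≠ 0) (hx : ∀ i j, 0 < x i j) (hθ : ContinuousAt θ x) :
    ContinuousAt (fun γ => P1 μ1 (θ γ) γ) x := by
  refine continuousAt_pi.2 fun i => continuousAt_pi.2 fun j => ?_
  have hs : ∑ j, x i j ≠ 0 := (Finset.sum_pos (fun j _ => hx i j) Finset.univ_nonempty).ne'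
  have hrow : ContinuousAt (fun γ : Matrix (Fin n1) (Fin n2) ℝ => μ1 i / ∑ j, γ i j) x :=
    continuousAt_const.div (by fun_prop : Continuous fun γ : Matrix (Fin n1) (Fin n2) ℝ =>
      ∑ j, γ i j).continuousAt hs
  exact (continuous_apply_apply i j).continuousAt.mul
    (hrow.rpow hθ (Or.inl (div_ne_zero (hμ1 i) hs)))

lemma continuousAt_P2 [Nonempty (Fin n1)] {μ2 : Fin n2 → ℝ}
    {θ : Matrix (Fin n1) (Fin n2) ℝ → ℝ} {x : Matrix (Fin n1) (Fin n2) ℝ}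
    (hμ2 : ∀ j, μ2 j ≠ 0) (hx : ∀ i j, 0 < x i j) (hθ : ContinuousAt θ x) :
    ContinuousAt (fun γ => P2 μ2 (θ γ) γ) x := by
  refine continuousAt_pi.2 fun i => continuousAt_pi.2 fun j => ?_
  have hs : ∑ i, x i j ≠ 0 := (Finset.sum_pos (fun i _ => hx i j) Finset.univ_nonempty).ne'
  have hcol : ContinuousAt (fun γ : Matrix (Fin n1) (Fin n2) ℝ => μ2 j / ∑ i, γ i j) x :=
    continuousAt_const.div (by fun_prop : Continuous fun γ : Matrix (Fin n1) (Fin n2) ℝ =>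
      ∑ i, γ i j).continuousAt hs
  exact (continuous_apply_apply i j).continuousAt.mul
    (hcol.rpow hθ (Or.inl (div_ne_zero (hμ2 j) hs)))

end Sinkhorn

theorem stmt_4_general (n1 n2 : ℕ) (hn1 : 0 < n1) (hn2 : 0 < n2)
    (μ1 : Fin n1 → ℝ) (μ2 : Fin n2 → ℝ)
    (hμ1 : ∀ i, 0 < μ1 i) (hμ2 : ∀ j, 0 < μ2 j)
    (γ0 : Matrix (Fin n1) (Fin n2) ℝ) (hγ0 : ∀ i j, 0 < γ0 i j)
    -- γ* is the unique element of S ∩ C1 ∩ C2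
    (gstar : Matrix (Fin n1) (Fin n2) ℝ)
    (hgsS : ∃ a : Fin n1 → ℝ, ∃ b : Fin n2 → ℝ, (∀ i, 0 < a i) ∧ (∀ j, 0 < b j) ∧
      gstar = Matrix.of fun i j => a i * γ0 i j * b j)
    (hgs1 : ∀ i, ∑ j, gstar i j = μ1 i) (hgs2 : ∀ j, ∑ i, gstar i j = μ2 j)
    -- θ1, θ2 : continuous functions on the set of entrywise positive matrices
    (θ1 θ2 : Matrix (Fin n1) (Fin n2) ℝ → ℝ)
    (hθ1c : ContinuousOn θ1 {γ | ∀ i j, 0 < γ i j})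
    (hθ2c : ContinuousOn θ2 {γ | ∀ i j, 0 < γ i j})
    -- descent conditions, strict whenever γ ∉ C_k
    (hθ1d : ∀ γ : Matrix (Fin n1) (Fin n2) ℝ, (∀ i j, 0 < γ i j) →
      KL gstar (P1 μ1 (θ1 γ) γ) ≤ KL gstar γ)
    (hθ1s : ∀ γ : Matrix (Fin n1) (Fin n2) ℝ, (∀ i j, 0 < γ i j) →
      ¬ (∀ i, ∑ j, γ i j = μ1 i) → KL gstar (P1 μ1 (θ1 γ) γ) < KL gstar γ)
    (hθ2d : ∀ γ : Matrix (Fin n1) (Fin n2) ℝ, (∀ i j, 0 < γ i j) →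
      KL gstar (P2 μ2 (θ2 γ) γ) ≤ KL gstar γ)
    (hθ2s : ∀ γ : Matrix (Fin n1) (Fin n2) ℝ, (∀ i j, 0 < γ i j) →
      ¬ (∀ j, ∑ i, γ i j = μ2 j) → KL gstar (P2 μ2 (θ2 γ) γ) < KL gstar γ)
    -- the iteration
    (γseq : ℕ → Matrix (Fin n1) (Fin n2) ℝ)
    (h0 : γseq 0 = γ0)
    (hrec : ∀ ℓ, γseq (ℓ + 1) =
      P2 μ2 (θ2 (P1 μ1 (θ1 (γseq ℓ)) (γseq ℓ))) (P1 μ1 (θ1 (γseq ℓ)) (γseq ℓ))) :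
    Filter.Tendsto γseq Filter.atTop (nhds gstar) := by
  have : Nonempty (Fin n1) := ⟨⟨0, hn1⟩⟩
  have : Nonempty (Fin n2) := ⟨⟨0, hn2⟩⟩
  have hS : IsDiagScaling γ0 gstar := hgsS
  have hgs_pos := hS.pos hγ0
  have hscal : ∀ ℓ, IsDiagScaling γ0 (γseq ℓ) := by
    intro ℓ
    induction ℓ with
    | zero => exact h0 ▸ .refl γ0
    | succ ℓ ih =>
      have h1 := ih.trans (isDiagScaling_P1 (θ1 (γseq ℓ)) hμ1 (ih.pos hγ0))
      exact hrec ℓ ▸ h1.trans (isDiagScaling_P2 _ hμ2 (h1.pos hγ0))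
  have hpos ℓ : ∀ i j, 0 < γseq ℓ i j := (hscal ℓ).pos hγ0
  have hanti : Antitone fun ℓ => KL gstar (γseq ℓ) := antitone_nat_of_succ_le fun ℓ =>
    hrec ℓ ▸ (hθ2d _ (P1_pos _ hμ1 (hpos ℓ))).trans (hθ1d _ (hpos ℓ))
  have hL := tendsto_atTop_ciInf hanti
    ⟨0, Set.forall_mem_range.2 fun ℓ => KL_nonneg (fun i j => (hgs_pos i j).le) (hpos ℓ)⟩
  obtain ⟨K, hK, hKpos, hKsub⟩ := exists_isCompact_of_KL_le hgs_pos (KL gstar γ0)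
  refine hK.tendsto_nhds_of_unique_mapClusterPt
    (.of_forall fun ℓ => hKsub _ (hpos ℓ) (h0 ▸ hanti (Nat.zero_le ℓ))) fun x hxK hx => ?_
  have hxpos := hKpos x hxK
  obtain ⟨hx1, hx2⟩ : x ∈ {γ : Matrix (Fin n1) (Fin n2) ℝ | ∀ i, ∑ j, γ i j = μ1 i} ∩
      {γ | ∀ j, ∑ i, γ i j = μ2 j} :=
    mem_inter_of_mapClusterPt_of_alternating_descent (F := KL gstar)
      (T1 := fun γ => P1 μ1 (θ1 γ) γ) (T2 := fun γ => P2 μ2 (θ2 γ) γ)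
      (U := {γ : Matrix (Fin n1) (Fin n2) ℝ | ∀ i j, 0 < γ i j})
      (fun y hy => continuousAt_KL (fun i j => (hgs_pos i j).ne') fun i j => (hy i j).ne')
      (fun y hy => ⟨P1_pos _ hμ1 hy, continuousAt_P1 (fun i => (hμ1 i).ne') hy
        (hθ1c.continuousAt (isOpen_setOf_forall_pos.mem_nhds hy))⟩)
      (fun y hy => ⟨P2_pos _ hμ2 hy, continuousAt_P2 (fun j => (hμ2 j).ne') hy
        (hθ2c.continuousAt (isOpen_setOf_forall_pos.mem_nhds hy))⟩)
      hθ1d hθ2d hθ1s hθ2s (fun y hy => P1_eq_self _ (fun i => (hμ1 i).ne') hy) hpos hrec hL hx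
      hxpos
  have hxS : IsDiagScaling γ0 x := .of_mem_closure hγ0 hxpos (hx.mem_closure (.of_forall hscal))
  exact (hS.symm.trans hxS).eq_of_sum_eq (fun i j => (hgs_pos i j).le)
    (fun i => (hx1 i).trans (hgs1 i).symm) (fun j => (hx2 j).trans (hgs2 j).symm)

theorem stmt_4 (n1 n2 : ℕ) (hn1 : 0 < n1) (hn2 : 0 < n2)
    (μ1 : Fin n1 → ℝ) (μ2 : Fin n2 → ℝ)
    (hμ1 : ∀ i, 0 < μ1 i) (hμ2 : ∀ j, 0 < μ2 j)
    (hmass : ∑ i, μ1 i = ∑ j, μ2 j)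
    (γ0 : Matrix (Fin n1) (Fin n2) ℝ) (hγ0 : ∀ i j, 0 < γ0 i j)
    -- γ* is the unique element of S ∩ C1 ∩ C2
    (gstar : Matrix (Fin n1) (Fin n2) ℝ)
    (hgsS : ∃ a : Fin n1 → ℝ, ∃ b : Fin n2 → ℝ, (∀ i, 0 < a i) ∧ (∀ j, 0 < b j) ∧
      gstar = Matrix.of fun i j => a i * γ0 i j * b j)
    (hgs1 : ∀ i, ∑ j, gstar i j = μ1 i) (hgs2 : ∀ j, ∑ i, gstar i j = μ2 j)
    -- θ1, θ2 : continuous functions on the set of entrywise positive matrices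
    (θ1 θ2 : Matrix (Fin n1) (Fin n2) ℝ → ℝ)
    (hθ1c : ContinuousOn θ1 {γ | ∀ i j, 0 < γ i j})
    (hθ2c : ContinuousOn θ2 {γ | ∀ i j, 0 < γ i j})
    -- descent conditions, strict whenever γ ∉ C_k
    (hθ1d : ∀ γ : Matrix (Fin n1) (Fin n2) ℝ, (∀ i j, 0 < γ i j) →
      KL gstar (P1 μ1 (θ1 γ) γ) ≤ KL gstar γ)
    (hθ1s : ∀ γ : Matrix (Fin n1) (Fin n2) ℝ, (∀ i j, 0 < γ i j) →
      ¬ (∀ i, ∑ j, γ i j = μ1 i) → KL gstar (P1 μ1 (θ1 γ) γ) < KL gstar γ)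
    (hθ2d : ∀ γ : Matrix (Fin n1) (Fin n2) ℝ, (∀ i j, 0 < γ i j) →
      KL gstar (P2 μ2 (θ2 γ) γ) ≤ KL gstar γ)
    (hθ2s : ∀ γ : Matrix (Fin n1) (Fin n2) ℝ, (∀ i j, 0 < γ i j) →
      ¬ (∀ j, ∑ i, γ i j = μ2 j) → KL gstar (P2 μ2 (θ2 γ) γ) < KL gstar γ)
    -- the iteration
    (γseq : ℕ → Matrix (Fin n1) (Fin n2) ℝ)
    (h0 : γseq 0 = γ0)
    (hrec : ∀ ℓ, γseq (ℓ + 1) =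
      P2 μ2 (θ2 (P1 μ1 (θ1 (γseq ℓ)) (γseq ℓ))) (P1 μ1 (θ1 (γseq ℓ)) (γseq ℓ))) :
    Filter.Tendsto γseq Filter.atTop (nhds gstar) :=
  stmt_4_general n1 n2 hn1 hn2 μ1 μ2 hμ1 hμ2 γ0 hγ0 gstar hgsS hgs1 hgs2 θ1 θ2 hθ1c hθ2c hθ1d hθ1s
    hθ2d hθ2s γseq h0 hrec
end

section
/- Let n1, n2 be positive integers, let μ1 ∈ ℝ^{n1} have strictly positive entries, and let γ*, γ ∈ ℝ^{n1×n2} have strictly positive entries with A1γ* = μ1. Set F(ξ) = KL(γ*, ξ). Then for all real numbers θ, ω with 1 ≤ θ < ω, one has F(P^θ_{C1}(γ)) ≤ F(P^ω_{C1}(γ)), with equality if and only if A1γ = μ1. -/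
open scoped BigOperators

lemma key_strict {r θ ω : ℝ} (hr : 0 < r) (hθ : 1 ≤ θ) (hθω : θ < ω) (hne : r ≠ 1) :
    r ^ θ + (ω - θ) * (r * Real.log r) < r ^ ω := by
  obtain ⟨c, hc, hceq⟩ := exists_hasDerivAt_eq_slope (fun x => r ^ x)
    (fun x => r ^ x * Real.log r) hθω
    (fun x _ => ((Real.hasStrictDerivAt_const_rpow hr x).hasDerivAt.continuousAt).continuousWithinAt)
    (fun x _ => (Real.hasStrictDerivAt_const_rpow hr x).hasDerivAt)
  have hsub : 0 < ω - θ := sub_pos.mpr hθω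
  have h1c : 1 < c := lt_of_le_of_lt hθ hc.1
  have hmain : r * Real.log r < r ^ c * Real.log r := by
    rcases lt_or_gt_of_ne hne with h | h
    · have hlog : Real.log r < 0 := Real.log_neg hr h
      have h2 : r ^ c < r ^ (1:ℝ) := Real.rpow_lt_rpow_of_exponent_gt hr h h1c
      rw [Real.rpow_one] at h2
      exact mul_lt_mul_of_neg_right h2 hlog
    · have hlog : 0 < Real.log r := Real.log_pos h
      have h2 : r ^ (1:ℝ) < r ^ c := Real.rpow_lt_rpow_of_exponent_lt h h1c
      rw [Real.rpow_one] at h2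
      exact mul_lt_mul_of_pos_right h2 hlog
  have heq : r ^ ω - r ^ θ = (ω - θ) * (r ^ c * Real.log r) := by
    rw [eq_div_iff hsub.ne'] at hceq
    linarith [hceq]
  nlinarith [mul_lt_mul_of_pos_left hmain hsub]

theorem stmt_5 (n1 n2 : ℕ) (hn1 : 0 < n1) (hn2 : 0 < n2)
    (μ1 : Fin n1 → ℝ) (hμ1 : ∀ i, 0 < μ1 i)
    (gstar γ : Matrix (Fin n1) (Fin n2) ℝ)
    (hgs : ∀ i j, 0 < gstar i j) (hγ : ∀ i j, 0 < γ i j)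
    (hmarg : ∀ i, ∑ j, gstar i j = μ1 i)
    (θ ω : ℝ) (hθ : 1 ≤ θ) (hθω : θ < ω) :
    KL gstar (P1 μ1 θ γ) ≤ KL gstar (P1 μ1 ω γ) ∧
      (KL gstar (P1 μ1 θ γ) = KL gstar (P1 μ1 ω γ) ↔ ∀ i, ∑ j, γ i j = μ1 i) := by
  have hne2 : Nonempty (Fin n2) := ⟨⟨0, hn2⟩⟩
  set s : Fin n1 → ℝ := fun i => ∑ j, γ i j with hs_def
  have hs : ∀ i, 0 < s i := fun i =>
    Finset.sum_pos (fun j _ => hγ i j) Finset.univ_nonempty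
  set r : Fin n1 → ℝ := fun i => μ1 i / s i with hr_def
  have hr : ∀ i, 0 < r i := fun i => div_pos (hμ1 i) (hs i)
  -- closed form for KL as a function of the exponent
  have hform : ∀ e : ℝ,
      KL gstar (P1 μ1 e γ) =
        (∑ i, ∑ j, gstar i j * (Real.log (gstar i j / γ i j) - 1))
          - e * ∑ i, μ1 i * Real.log (r i) + ∑ i, s i * r i ^ e := by
    intro e
    unfold KL P1
    have h1 : ∀ i, ∑ j, gstar i j * (Real.log (gstar i j / (γ i j * r i ^ e)) - 1)
        = (∑ j, gstar i j * (Real.log (gstar i j / γ i j) - 1))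
            - e * (μ1 i * Real.log (r i)) := by
      intro i
      have hpt : ∀ j, gstar i j * (Real.log (gstar i j / (γ i j * r i ^ e)) - 1)
          = gstar i j * (Real.log (gstar i j / γ i j) - 1)
            - gstar i j * (e * Real.log (r i)) := by
        intro j
        have hlog : Real.log (gstar i j / (γ i j * r i ^ e))
            = Real.log (gstar i j / γ i j) - e * Real.log (r i) := by
          rw [Real.log_div (hgs i j).ne' (mul_pos (hγ i j) (Real.rpow_pos_of_pos (hr i) e)).ne',
            Real.log_mul (hγ i j).ne' (Real.rpow_pos_of_pos (hr i) e).ne',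
            Real.log_rpow (hr i), Real.log_div (hgs i j).ne' (hγ i j).ne']
          ring
        rw [hlog]; ring
      rw [Finset.sum_congr rfl (fun j _ => hpt j), Finset.sum_sub_distrib,
        ← Finset.sum_mul, hmarg i]
      ring
    have h2 : ∀ i, ∑ j, γ i j * r i ^ e = s i * r i ^ e := by
      intro i
      rw [hs_def, Finset.sum_mul]
    simp only [Matrix.of_apply]
    rw [Finset.sum_congr rfl (fun i _ => h1 i), Finset.sum_congr rfl (fun i _ => h2 i),
      Finset.sum_sub_distrib, ← Finset.mul_sum]
  -- the difference as a sum of nonnegative terms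
  set T : Fin n1 → ℝ :=
    fun i => s i * (r i ^ ω - (r i ^ θ + (ω - θ) * (r i * Real.log (r i)))) with hT_def
  have hμsr : ∀ i, μ1 i = s i * r i := by
    intro i
    have hsne := (hs i).ne'
    rw [hr_def]
    field_simp
  have hdiff : KL gstar (P1 μ1 ω γ) - KL gstar (P1 μ1 θ γ) = ∑ i, T i := by
    rw [hform ω, hform θ]
    have hTi : ∀ i, T i = (s i * r i ^ ω - s i * r i ^ θ)
        - (ω - θ) * (μ1 i * Real.log (r i)) := by
      intro i
      rw [hT_def]
      rw [hμsr i]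
      ring
    rw [Finset.sum_congr rfl (fun i _ => hTi i)]
    simp only [Finset.sum_sub_distrib, ← Finset.mul_sum]
    ring
  have hT0 : ∀ i, (0 ≤ T i) ∧ (T i = 0 ↔ r i = 1) := by
    intro i
    by_cases h : r i = 1
    · have hTi : T i = 0 := by
        simp only [hT_def, h, Real.one_rpow, Real.log_one]
        ring
      exact ⟨hTi.ge, by simp [hTi, h]⟩
    · have hk := key_strict (hr i) hθ hθω h
      have : 0 < T i := mul_pos (hs i) (by linarith)
      exact ⟨this.le, by constructor <;> intro hh <;> [exact absurd hh.symm this.ne; exact absurd hh h]⟩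
  have hsum_nonneg : 0 ≤ ∑ i, T i := Finset.sum_nonneg fun i _ => (hT0 i).1
  have hr1 : ∀ i, (r i = 1 ↔ s i = μ1 i) := by
    intro i
    rw [hr_def]
    rw [div_eq_one_iff_eq (hs i).ne']
    exact ⟨fun h => h.symm, fun h => h.symm⟩
  constructor
  · linarith [hdiff, hsum_nonneg]
  · constructor
    · intro heq
      have hz : ∑ i, T i = 0 := by linarith [hdiff]
      intro i
      have := (Finset.sum_eq_zero_iff_of_nonneg (fun i _ => (hT0 i).1)).mp hz i (Finset.mem_univ i)
      exact (hr1 i).mp ((hT0 i).2.mp this)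
    · intro hm
      have hz : ∀ i, T i = 0 := fun i => (hT0 i).2.mpr ((hr1 i).mpr (hm i))
      have : ∑ i, T i = 0 := Finset.sum_eq_zero fun i _ => hz i
      linarith [hdiff]
end

section
/- Let n1, n2 be positive integers, let μ1 ∈ ℝ^{n1} have strictly positive entries, and let γ* ∈ ℝ^{n1×n2} have strictly positive entries with A1γ* = μ1; set F(ξ) = KL(γ*, ξ). Fix θ0 ∈ [1, 2) and δ > 0, and define Θ*(u) = sup{ ω ∈ [1, 2] : φ_ω(min_i u_i) ≥ 0 } and Θ(u) = min(max(1, Θ*(u) − δ), θ0) for entrywise positive vectors u ∈ ℝ^{n1}. Then the function θ1(γ) = Θ((A1γ) ⊘ μ1) is continuous on the set of entrywise positive n1×n2 matrices, and satisfies F(P^{θ1(γ)}_{C1}(γ)) ≤ F(γ) for every entrywise positive γ, with strict inequality whenever A1γ ≠ μ1. -/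
/-!
Rescaling row `i` of `γ` by `c_i = u_i ^ (-θ)`, where `u = (A1 γ) ⊘ μ1`, lowers `KL(γ*, ·)` by
exactly `∑ i, μ1 i * φ_θ(u_i)`, so descent amounts to `φ_θ(u_i) ≥ 0`, with equality only at
`u_i = 1`.

For fixed `x > 0`, `ω ↦ φ_ω(x)` is decreasing on `[1, ∞)`, so `{ω ∈ [1, 2] : φ_ω(m) ≥ 0}` is an
interval ending at `Θ*(m)`; as `θ = Θ(u)` is either `1` or `< Θ*(min u)`, this gives
`φ_θ(min u) > 0` when `min u < 1`. In `x`, `φ_θ` is concave up to the inflection point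
`c_θ = (θ - 1) ^ (1 / (θ - 1))` and strictly convex beyond it, with `φ_θ(1) = φ_θ'(1) = 0`. Hence
`φ_θ > 0` on `[c_θ, ∞) \ {1}`, while on `[min u, c_θ]` concavity bounds `φ_θ` below by its
positive endpoint values.

Continuity of `Θ*` comes from the same monotonicity in `ω` and continuity in `x`: an `ω` with
`φ_ω(m) < 0`, resp. `> 0`, keeps that sign near `m`.
-/

open scoped BigOperators

/-- `Θ*(u) = sup { ω ∈ [1,2] : φ_ω(min_i u_i) ≥ 0 }`. -/
noncomputable def ThetaStar {n : ℕ} (u : Fin n → ℝ) : ℝ :=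
  sSup {ω : ℝ | ω ∈ Set.Icc (1 : ℝ) 2 ∧ 0 ≤ phi ω (sInf (Set.range u))}

/-- `Θ(u) = min(max(1, Θ*(u) − δ), θ0)`. -/
noncomputable def Theta {n : ℕ} (θ0 δ : ℝ) (u : Fin n → ℝ) : ℝ :=
  min (max 1 (ThetaStar u - δ)) θ0

open Real Set Filter Topology

lemma phi_eq_of_pos {x : ℝ} (hx : 0 < x) (ω : ℝ) :
    phi ω x = x - x ^ (1 - ω) - ω * log x := by
  rw [phi, sub_eq_add_neg 1 ω, rpow_add hx, rpow_one]
  ring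

@[simp]
lemma phi_apply_one (ω : ℝ) : phi ω 1 = 0 := by
  simp [phi]

lemma phi_one_eq {x : ℝ} (hx : 0 < x) : phi 1 x = x - 1 - log x := by
  rw [phi_eq_of_pos hx, sub_self, rpow_zero, one_mul]

lemma phi_one_nonneg {x : ℝ} (hx : 0 < x) : 0 ≤ phi 1 x := by
  linarith [phi_one_eq hx, log_le_sub_one_of_pos hx]

lemma phi_one_pos {x : ℝ} (hx : 0 < x) (hx1 : x ≠ 1) : 0 < phi 1 x := by
  linarith [phi_one_eq hx, log_lt_sub_one_of_pos hx hx1]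

lemma hasDerivAt_phi_exponent {x : ℝ} (hx : 0 < x) (ω : ℝ) :
    HasDerivAt (fun ω => phi ω x) (log x * (x ^ (1 - ω) - 1)) ω := by
  have h := ((((hasDerivAt_id ω).const_sub 1).const_rpow hx).const_sub x).sub
    ((hasDerivAt_id ω).mul_const (log x))
  rw [funext fun ω => phi_eq_of_pos hx ω]
  exact h.congr_deriv (by simp only [id]; ring)

lemma phi_exponent_strictAntiOn {x : ℝ} (hx : 0 < x) (hx1 : x ≠ 1) :
    StrictAntiOn (fun ω => phi ω x) (Ici 1) := by
  refine strictAntiOn_of_hasDerivWithinAt_neg (convex_Ici 1)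
    (fun ω _ => (hasDerivAt_phi_exponent hx ω).continuousAt.continuousWithinAt)
    (fun ω _ => (hasDerivAt_phi_exponent hx ω).hasDerivWithinAt) fun ω hω => ?_
  rw [interior_Ici] at hω
  have hω : 1 - ω < 0 := by linarith [mem_Ioi.mp hω]
  rcases hx1.lt_or_gt with hlt | hgt
  · exact mul_neg_of_neg_of_pos (log_neg hx hlt)
      (sub_pos.mpr (one_lt_rpow_of_pos_of_lt_one_of_neg hx hlt hω))
  · exact mul_neg_of_pos_of_neg (log_pos hgt) (sub_neg.mpr (rpow_lt_one_of_one_lt_of_neg hgt hω))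

lemma phi_exponent_antitoneOn {x : ℝ} (hx : 0 < x) :
    AntitoneOn (fun ω => phi ω x) (Ici 1) := by
  rcases eq_or_ne x 1 with rfl | hx1
  · simp [AntitoneOn]
  · exact (phi_exponent_strictAntiOn hx hx1).antitoneOn

section Inflection

noncomputable def phiDeriv (θ x : ℝ) : ℝ := 1 + (θ - 1) * x ^ (-θ) - θ * x⁻¹

/-- The inflection point of `φ_θ` on `(0, ∞)`, where `x ^ (θ - 1) = θ - 1`. -/
noncomputable def phiInflection (θ : ℝ) : ℝ := (θ - 1) ^ (θ - 1)⁻¹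

variable {θ x : ℝ}

lemma hasDerivAt_phi (hx : 0 < x) (θ : ℝ) : HasDerivAt (phi θ) (phiDeriv θ x) x := by
  have h := ((hasDerivAt_id x).sub (hasDerivAt_rpow_const (p := 1 - θ) (Or.inl hx.ne'))).sub
    ((hasDerivAt_log hx.ne').const_mul θ)
  refine (h.congr_deriv ?_).congr_of_eventuallyEq
    (eventually_of_mem (Ioi_mem_nhds hx) fun y hy => phi_eq_of_pos hy θ)
  rw [phiDeriv, show 1 - θ - 1 = -θ by ring]
  ring

lemma phiDeriv_apply_one (θ : ℝ) : phiDeriv θ 1 = 0 := by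
  simp [phiDeriv]

lemma hasDerivAt_phiDeriv (hx : 0 < x) (θ : ℝ) :
    HasDerivAt (phiDeriv θ) (θ * x ^ (-θ - 1) * (x ^ (θ - 1) - (θ - 1))) x := by
  have h := (((hasDerivAt_rpow_const (p := -θ) (Or.inl hx.ne')).const_mul (θ - 1)).const_add
    1).sub ((hasDerivAt_inv hx.ne').const_mul θ)
  refine h.congr_deriv ?_
  have hpow : x ^ (-θ - 1) * x ^ (θ - 1) = (x ^ 2)⁻¹ := by
    rw [← rpow_add hx, show -θ - 1 + (θ - 1) = -(2 : ℕ) by ring, rpow_neg hx.le, rpow_natCast]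
  linear_combination (-θ) * hpow

lemma phiInflection_pos (hθ : 1 < θ) : 0 < phiInflection θ :=
  rpow_pos_of_pos (by linarith) _

lemma phiInflection_le_one (hθ1 : 1 < θ) (hθ2 : θ ≤ 2) : phiInflection θ ≤ 1 :=
  rpow_le_one (by linarith) (by linarith) (by rw [inv_nonneg]; linarith)

lemma phiInflection_lt_one (hθ1 : 1 < θ) (hθ2 : θ < 2) : phiInflection θ < 1 :=
  rpow_lt_one (by linarith) (by linarith) (by rw [inv_pos]; linarith)

lemma phiInflection_lt_iff (hθ : 1 < θ) (hx : 0 ≤ x) :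
    phiInflection θ < x ↔ θ - 1 < x ^ (θ - 1) := by
  have hc : phiInflection θ ^ (θ - 1) = θ - 1 := by
    rw [phiInflection, ← rpow_mul (by linarith), inv_mul_cancel₀ (by linarith), rpow_one]
  rw [← rpow_lt_rpow_iff (phiInflection_pos hθ).le hx (by linarith : 0 < θ - 1), hc]

lemma phiDeriv_strictMonoOn (hθ : 1 < θ) : StrictMonoOn (phiDeriv θ) (Ici (phiInflection θ)) := by
  have hpos : ∀ y ∈ Ici (phiInflection θ), 0 < y := fun y hy =>
    (phiInflection_pos hθ).trans_le hy
  refine strictMonoOn_of_hasDerivWithinAt_pos (convex_Ici _)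
    (fun y hy => (hasDerivAt_phiDeriv (hpos y hy) θ).continuousAt.continuousWithinAt)
    (fun y hy => (hasDerivAt_phiDeriv (hpos y (interior_subset hy)) θ).hasDerivWithinAt)
    fun y hy => ?_
  rw [interior_Ici] at hy
  have hy0 := (phiInflection_pos hθ).trans hy
  have hsign := (phiInflection_lt_iff hθ hy0.le).mp hy
  exact mul_pos (mul_pos (by linarith) (rpow_pos_of_pos hy0 _)) (by linarith)

lemma phi_concaveOn (hθ : 1 < θ) : ConcaveOn ℝ (Ioc 0 (phiInflection θ)) (phi θ) := by
  refine concaveOn_of_hasDerivWithinAt2_nonpos (convex_Ioc _ _)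
    (fun y hy => (hasDerivAt_phi hy.1 θ).continuousAt.continuousWithinAt)
    (fun y hy => (hasDerivAt_phi (interior_subset hy).1 θ).hasDerivWithinAt)
    (fun y hy => (hasDerivAt_phiDeriv (interior_subset hy).1 θ).hasDerivWithinAt)
    fun y hy => ?_
  rw [interior_Ioc] at hy
  have hsign := (phiInflection_lt_iff hθ hy.1.le).not.mp (not_lt.mpr hy.2.le)
  exact mul_nonpos_of_nonneg_of_nonpos
    (mul_nonneg (by linarith) (rpow_pos_of_pos hy.1 _).le) (by linarith)

/-- Beyond its inflection point `φ_θ` is strictly convex with `φ_θ(1) = φ_θ'(1) = 0`. -/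
lemma phi_pos_of_phiInflection_le (hθ1 : 1 < θ) (hθ2 : θ ≤ 2) (hx : phiInflection θ ≤ x)
    (hx1 : x ≠ 1) : 0 < phi θ x := by
  have hpos : ∀ y ∈ Ici (phiInflection θ), 0 < y := fun y hy =>
    (phiInflection_pos hθ1).trans_le hy
  have hc1 := phiInflection_le_one hθ1 hθ2
  have hmono := phiDeriv_strictMonoOn hθ1
  rcases hx1.lt_or_gt with hlt | hgt
  · have hanti : StrictAntiOn (phi θ) (Icc (phiInflection θ) 1) := by
      refine strictAntiOn_of_hasDerivWithinAt_neg (convex_Icc _ _)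
        (fun y hy => (hasDerivAt_phi (hpos y hy.1) θ).continuousAt.continuousWithinAt)
        (fun y hy => (hasDerivAt_phi (hpos y (interior_subset hy).1) θ).hasDerivWithinAt)
        fun y hy => ?_
      rw [interior_Icc] at hy
      simpa [phiDeriv_apply_one] using hmono hy.1.le hc1 hy.2
    simpa using hanti ⟨hx, hlt.le⟩ ⟨hc1, le_rfl⟩ hlt
  · have hmono' : StrictMonoOn (phi θ) (Ici 1) := by
      refine strictMonoOn_of_hasDerivWithinAt_pos (convex_Ici _)
        (fun y hy => (hasDerivAt_phi (one_pos.trans_le hy) θ).continuousAt.continuousWithinAt)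
        (fun y hy => (hasDerivAt_phi (one_pos.trans_le (interior_subset hy)) θ).hasDerivWithinAt)
        fun y hy => ?_
      rw [interior_Ici] at hy
      simpa [phiDeriv_apply_one] using hmono hc1 (hc1.trans hy.out.le) hy.out
    simpa using hmono' self_mem_Ici hgt.le hgt

lemma phi_nonneg_of_phiInflection_le (hθ1 : 1 < θ) (hθ2 : θ ≤ 2) (hx : phiInflection θ ≤ x) :
    0 ≤ phi θ x := by
  rcases eq_or_ne x 1 with rfl | hx1
  · simp
  · exact (phi_pos_of_phiInflection_le hθ1 hθ2 hx hx1).le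

lemma phi_pos_of_one_lt (hθ1 : 1 ≤ θ) (hθ2 : θ ≤ 2) (hx : 1 < x) : 0 < phi θ x := by
  rcases hθ1.eq_or_lt with rfl | hθ1
  · exact phi_one_pos (one_pos.trans hx) hx.ne'
  · exact phi_pos_of_phiInflection_le hθ1 hθ2 ((phiInflection_le_one hθ1 hθ2).trans hx.le) hx.ne'

/-- On `[m, c_θ]` concavity bounds `φ_θ` below by its values at the endpoints. -/
lemma phi_pos_of_le_of_lt_one {m : ℝ} (hθ1 : 1 ≤ θ) (hθ2 : θ < 2) (hm : 0 < m) (hmx : m ≤ x)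
    (hx1 : x < 1) (hphim : 0 < phi θ m) : 0 < phi θ x := by
  rcases hθ1.eq_or_lt with rfl | hθ1
  · exact phi_one_pos (hm.trans_le hmx) hx1.ne
  rcases le_or_gt (phiInflection θ) x with hc | hc
  · exact phi_pos_of_phiInflection_le hθ1 hθ2.le hc hx1.ne
  have hc1 : 0 < phi θ (phiInflection θ) :=
    phi_pos_of_phiInflection_le hθ1 hθ2.le le_rfl (phiInflection_lt_one hθ1 hθ2).ne
  calc 0 < min (phi θ m) (phi θ (phiInflection θ)) := lt_min hphim hc1
    _ ≤ phi θ x := (phi_concaveOn hθ1).min_le_of_mem_Icc ⟨hm, hmx.trans hc.le⟩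
        ⟨phiInflection_pos hθ1, le_rfl⟩ ⟨hmx, hc.le⟩

end Inflection

section ThetaStar

noncomputable def thetaStarOf (m : ℝ) : ℝ := sSup {ω : ℝ | ω ∈ Icc (1 : ℝ) 2 ∧ 0 ≤ phi ω m}

lemma ThetaStar_eq {n : ℕ} (u : Fin n → ℝ) : ThetaStar u = thetaStarOf (⨅ i, u i) := rfl

variable {m θ : ℝ}

lemma bddAbove_thetaStarOf_set : BddAbove {ω : ℝ | ω ∈ Icc (1 : ℝ) 2 ∧ 0 ≤ phi ω m} :=
  ⟨2, fun _ h => h.1.2⟩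

lemma one_mem_thetaStarOf_set (hm : 0 < m) : 1 ∈ {ω : ℝ | ω ∈ Icc (1 : ℝ) 2 ∧ 0 ≤ phi ω m} :=
  ⟨⟨le_rfl, one_le_two⟩, phi_one_nonneg hm⟩

lemma le_thetaStarOf (hθ : θ ∈ Icc (1 : ℝ) 2) (h : 0 ≤ phi θ m) : θ ≤ thetaStarOf m :=
  le_csSup bddAbove_thetaStarOf_set ⟨hθ, h⟩

lemma one_le_thetaStarOf (hm : 0 < m) : 1 ≤ thetaStarOf m :=
  le_csSup bddAbove_thetaStarOf_set (one_mem_thetaStarOf_set hm)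

lemma thetaStarOf_le_two (hm : 0 < m) : thetaStarOf m ≤ 2 :=
  csSup_le ⟨1, one_mem_thetaStarOf_set hm⟩ fun _ h => h.1.2

lemma exists_lt_phi_nonneg_of_lt_thetaStarOf (hm : 0 < m) (hθ : θ < thetaStarOf m) :
    ∃ ω, θ < ω ∧ ω ≤ 2 ∧ 0 ≤ phi ω m := by
  obtain ⟨ω, hω, hθω⟩ := exists_lt_of_lt_csSup ⟨1, one_mem_thetaStarOf_set hm⟩ hθ
  exact ⟨ω, hθω, hω.1.2, hω.2⟩

lemma phi_nonneg_of_lt_thetaStarOf (hm : 0 < m) (hθ1 : 1 ≤ θ) (hθ : θ < thetaStarOf m) :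
    0 ≤ phi θ m := by
  obtain ⟨ω, hθω, -, hω⟩ := exists_lt_phi_nonneg_of_lt_thetaStarOf hm hθ
  exact hω.trans (phi_exponent_antitoneOn hm hθ1 (hθ1.trans hθω.le : 1 ≤ ω) hθω.le)

lemma phi_pos_of_lt_thetaStarOf (hm : 0 < m) (hm1 : m ≠ 1) (hθ1 : 1 ≤ θ)
    (hθ : θ < thetaStarOf m) : 0 < phi θ m := by
  obtain ⟨ω, hθω, -, hω⟩ := exists_lt_phi_nonneg_of_lt_thetaStarOf hm hθ
  exact hω.trans_lt (phi_exponent_strictAntiOn hm hm1 hθ1 (hθ1.trans hθω.le : 1 ≤ ω) hθω)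

lemma thetaStarOf_le_of_phi_neg (hm : 0 < m) (hθ1 : 1 ≤ θ) (h : phi θ m < 0) :
    thetaStarOf m ≤ θ :=
  not_lt.mp fun hθ => (phi_nonneg_of_lt_thetaStarOf hm hθ1 hθ).not_gt h

lemma upperSemicontinuousAt_thetaStarOf (hm : 0 < m) : UpperSemicontinuousAt thetaStarOf m := by
  intro y hy
  have hpos : ∀ᶠ m' in 𝓝 m, 0 < m' := Ioi_mem_nhds hm
  rcases lt_or_ge 2 y with h2 | h2
  · filter_upwards [hpos] with m' hm' using (thetaStarOf_le_two hm').trans_lt h2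
  obtain ⟨θ, hθ, hθy⟩ := exists_between hy
  have hθ1 : 1 ≤ θ := (one_le_thetaStarOf hm).trans hθ.le
  have hneg : phi θ m < 0 :=
    not_le.mp fun h => (le_thetaStarOf ⟨hθ1, hθy.le.trans h2⟩ h).not_gt hθ
  filter_upwards [hpos, (hasDerivAt_phi hm θ).continuousAt.eventually_lt_const hneg]
    with m' hm' hneg'
  exact (thetaStarOf_le_of_phi_neg hm' hθ1 hneg').trans_lt hθy

/-- For `m ≥ 1` the bound comes from the neighbourhood `(c_θ, ∞)` of `m` on which `φ_θ ≥ 0`: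
continuity of `φ_θ` alone does not suffice at `m = 1`, where `φ_ω(1) = 0` for every `ω`. -/
lemma lowerSemicontinuousAt_thetaStarOf (hm : 0 < m) : LowerSemicontinuousAt thetaStarOf m := by
  intro y hy
  have hpos : ∀ᶠ m' in 𝓝 m, 0 < m' := Ioi_mem_nhds hm
  rcases lt_or_ge y 1 with h1 | h1
  · filter_upwards [hpos] with m' hm' using h1.trans_le (one_le_thetaStarOf hm')
  obtain ⟨θ, hyθ, hθ⟩ := exists_between hy
  have hθ1 : 1 < θ := h1.trans_lt hyθ
  have hθ2 : θ < 2 := hθ.trans_le (thetaStarOf_le_two hm)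
  rcases lt_or_ge m 1 with hm1 | hm1
  · have hphi : 0 < phi θ m := phi_pos_of_lt_thetaStarOf hm hm1.ne hθ1.le hθ
    filter_upwards [(hasDerivAt_phi hm θ).continuousAt.eventually_const_lt hphi] with m' hm'
    exact hyθ.trans_le (le_thetaStarOf ⟨hθ1.le, hθ2.le⟩ hm'.le)
  · have hc : phiInflection θ < m := (phiInflection_lt_one hθ1 hθ2).trans_le hm1
    filter_upwards [Ioi_mem_nhds hc] with m' hm'
    exact hyθ.trans_le (le_thetaStarOf ⟨hθ1.le, hθ2.le⟩
      (phi_nonneg_of_phiInflection_le hθ1 hθ2.le (le_of_lt hm')))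

lemma continuousOn_thetaStarOf : ContinuousOn thetaStarOf (Ioi 0) := fun _ hm =>
  (continuousAt_iff_lower_upperSemicontinuousAt.mpr
    ⟨lowerSemicontinuousAt_thetaStarOf hm, upperSemicontinuousAt_thetaStarOf hm⟩).continuousWithinAt

end ThetaStar

section Theta

variable {n : ℕ} {θ0 δ : ℝ} {u : Fin n → ℝ}

lemma one_le_Theta (hθ0 : 1 ≤ θ0) : 1 ≤ Theta θ0 δ u :=
  le_min (le_max_left _ _) hθ0

lemma Theta_le (u : Fin n → ℝ) : Theta θ0 δ u ≤ θ0 :=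
  min_le_right _ _

lemma Theta_lt_ThetaStar (hδ : 0 < δ) (h : 1 < Theta θ0 δ u) : Theta θ0 δ u < ThetaStar u := by
  have hmax : Theta θ0 δ u ≤ max 1 (ThetaStar u - δ) := min_le_left _ _
  rcases le_max_iff.mp hmax with h1 | h1
  · exact absurd h (not_lt.mpr h1)
  · linarith

lemma phi_Theta_pos (hu : ∀ i, 0 < u i) (hθ0 : θ0 ∈ Ico (1 : ℝ) 2) (hδ : 0 < δ) {i : Fin n}
    (hi : u i ≠ 1) : 0 < phi (Theta θ0 δ u) (u i) := by
  have hθ1 : 1 ≤ Theta θ0 δ u := one_le_Theta hθ0.1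
  have hθ2 : Theta θ0 δ u < 2 := (Theta_le u).trans_lt hθ0.2
  rcases hi.lt_or_gt with hlt | hgt
  · have : Nonempty (Fin n) := ⟨i⟩
    obtain ⟨k, hk⟩ := exists_eq_ciInf_of_finite (f := u)
    have hm0 : 0 < ⨅ j, u j := hk ▸ hu k
    have hmi : ⨅ j, u j ≤ u i := ciInf_le (Set.finite_range u).bddBelow i
    have hm1 : ⨅ j, u j ≠ 1 := (hmi.trans_lt hlt).ne
    have hphim : 0 < phi (Theta θ0 δ u) (⨅ j, u j) := by
      rcases hθ1.eq_or_lt with h | h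
      · rw [← h]
        exact phi_one_pos hm0 hm1
      · exact phi_pos_of_lt_thetaStarOf hm0 hm1 hθ1
          (ThetaStar_eq u ▸ Theta_lt_ThetaStar hδ h)
    exact phi_pos_of_le_of_lt_one hθ1 hθ2 hm0 hmi hlt hphim
  · exact phi_pos_of_one_lt hθ1 hθ2.le hgt

lemma phi_Theta_nonneg (hu : ∀ i, 0 < u i) (hθ0 : θ0 ∈ Ico (1 : ℝ) 2) (hδ : 0 < δ) (i : Fin n) :
    0 ≤ phi (Theta θ0 δ u) (u i) := by
  rcases eq_or_ne (u i) 1 with hi | hi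
  · simp [hi]
  · exact (phi_Theta_pos hu hθ0 hδ hi).le

lemma continuousOn_Theta_comp {X : Type*} [TopologicalSpace X] (hn : 0 < n) (θ0 δ : ℝ)
    {f : X → Fin n → ℝ} (hf : Continuous f) :
    ContinuousOn (fun x => Theta θ0 δ (f x)) {x | ∀ i, 0 < f x i} := by
  have : Nonempty (Fin n) := ⟨⟨0, hn⟩⟩
  have hmin : Continuous fun x => ⨅ i, f x i := by
    simp_rw [← Finset.inf'_univ_eq_ciInf]
    exact Continuous.finset_inf'_apply _ fun i _ => (continuous_apply i).comp hf
  have hmaps : MapsTo (fun x => ⨅ i, f x i) {x | ∀ i, 0 < f x i} (Ioi 0) := fun x hx => by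
    obtain ⟨k, hk⟩ := exists_eq_ciInf_of_finite (f := f x)
    simpa only [mem_Ioi, ← hk] using hx k
  simp only [Theta, ThetaStar_eq]
  exact (continuousOn_const.sup
    ((continuousOn_thetaStarOf.comp hmin.continuousOn hmaps).sub continuousOn_const)).inf
    continuousOn_const

end Theta

section KL

variable {n1 n2 : ℕ}

lemma KL_of_rowScale (g γ : Matrix (Fin n1) (Fin n2) ℝ) {c : Fin n1 → ℝ}
    (hγ : ∀ i j, 0 < γ i j) (hc : ∀ i, 0 < c i) :
    KL g (Matrix.of fun i j => γ i j * c i) =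
      KL g γ - ∑ i, ((1 - c i) * ∑ j, γ i j + log (c i) * ∑ j, g i j) := by
  have hlog : ∀ i j, g i j * log (g i j / (γ i j * c i)) =
      g i j * log (g i j / γ i j) - g i j * log (c i) := fun i j => by
    rcases eq_or_ne (g i j) 0 with h | h
    · simp [h]
    · rw [← div_div, log_div (div_ne_zero h (hγ i j).ne') (hc i).ne']
      ring
  simp only [KL, Matrix.of_apply, mul_sub, hlog, Finset.sum_sub_distrib, Finset.mul_sum,
    sub_mul, one_mul, Finset.sum_add_distrib]
  simp only [mul_comm (c _), mul_comm (log (c _))]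
  ring

lemma KL_P1 (μ : Fin n1 → ℝ) (θ : ℝ) {g γ : Matrix (Fin n1) (Fin n2) ℝ} (hμ : ∀ i, 0 < μ i)
    (hg : ∀ i, ∑ j, g i j = μ i) (hγ : ∀ i j, 0 < γ i j) (hs : ∀ i, 0 < ∑ j, γ i j) :
    KL g (P1 μ θ γ) = KL g γ - ∑ i, μ i * phi θ ((∑ j, γ i j) / μ i) := by
  rw [P1, KL_of_rowScale g γ hγ fun i => rpow_pos_of_pos (div_pos (hμ i) (hs i)) θ]
  congr 1
  refine Finset.sum_congr rfl fun i _ => ?_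
  have hu : 0 < (∑ j, γ i j) / μ i := div_pos (hs i) (hμ i)
  rw [phi, hg i, ← inv_div, inv_rpow hu.le, ← rpow_neg hu.le, log_rpow hu]
  have hμ0 := (hμ i).ne'
  field_simp
  ring

end KL

theorem stmt_7_general (n1 n2 : ℕ) (hn1 : 0 < n1) (hn2 : 0 < n2)
    (μ1 : Fin n1 → ℝ) (hμ1 : ∀ i, 0 < μ1 i)
    (gstar : Matrix (Fin n1) (Fin n2) ℝ)
    (hmarg : ∀ i, ∑ j, gstar i j = μ1 i)
    (θ0 : ℝ) (hθ0 : θ0 ∈ Set.Ico (1 : ℝ) 2) (δ : ℝ) (hδ : 0 < δ) :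
    ContinuousOn
      (fun γ : Matrix (Fin n1) (Fin n2) ℝ => Theta θ0 δ (fun i => (∑ j, γ i j) / μ1 i))
      {γ : Matrix (Fin n1) (Fin n2) ℝ | ∀ i j, 0 < γ i j} ∧
    ∀ γ : Matrix (Fin n1) (Fin n2) ℝ, (∀ i j, 0 < γ i j) →
      KL gstar (P1 μ1 (Theta θ0 δ (fun i => (∑ j, γ i j) / μ1 i)) γ) ≤ KL gstar γ ∧
      (¬ (∀ i, ∑ j, γ i j = μ1 i) →
        KL gstar (P1 μ1 (Theta θ0 δ (fun i => (∑ j, γ i j) / μ1 i)) γ) < KL gstar γ) := by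
  have hs : ∀ γ : Matrix (Fin n1) (Fin n2) ℝ, (∀ i j, 0 < γ i j) → ∀ i, 0 < ∑ j, γ i j :=
    fun γ hγ i => Finset.sum_pos (fun j _ => hγ i j) ⟨⟨0, hn2⟩, Finset.mem_univ _⟩
  have hu : ∀ γ : Matrix (Fin n1) (Fin n2) ℝ, (∀ i j, 0 < γ i j) →
      ∀ i, 0 < (∑ j, γ i j) / μ1 i :=
    fun γ hγ i => div_pos (hs γ hγ i) (hμ1 i)
  refine ⟨(continuousOn_Theta_comp hn1 θ0 δ (by fun_prop)).mono fun γ hγ => hu γ hγ, ?_⟩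
  intro γ hγ
  rw [KL_P1 μ1 _ hμ1 hmarg hγ (hs γ hγ)]
  refine ⟨sub_le_self _ (Finset.sum_nonneg fun i _ =>
    mul_nonneg (hμ1 i).le (phi_Theta_nonneg (hu γ hγ) hθ0 hδ i)), fun hne => ?_⟩
  obtain ⟨i, hrow⟩ := not_forall.mp hne
  have hi : (∑ j, γ i j) / μ1 i ≠ 1 := fun h => hrow ((div_eq_one_iff_eq (hμ1 i).ne').mp h)
  exact sub_lt_self _ (Finset.sum_pos' (fun k _ =>
    mul_nonneg (hμ1 k).le (phi_Theta_nonneg (hu γ hγ) hθ0 hδ k))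
    ⟨i, Finset.mem_univ i, mul_pos (hμ1 i) (phi_Theta_pos (hu γ hγ) hθ0 hδ hi)⟩)

theorem stmt_7 (n1 n2 : ℕ) (hn1 : 0 < n1) (hn2 : 0 < n2)
    (μ1 : Fin n1 → ℝ) (hμ1 : ∀ i, 0 < μ1 i)
    (gstar : Matrix (Fin n1) (Fin n2) ℝ) (hgs : ∀ i j, 0 < gstar i j)
    (hmarg : ∀ i, ∑ j, gstar i j = μ1 i)
    (θ0 : ℝ) (hθ0 : θ0 ∈ Set.Ico (1 : ℝ) 2) (δ : ℝ) (hδ : 0 < δ) :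
    ContinuousOn
      (fun γ : Matrix (Fin n1) (Fin n2) ℝ => Theta θ0 δ (fun i => (∑ j, γ i j) / μ1 i))
      {γ : Matrix (Fin n1) (Fin n2) ℝ | ∀ i j, 0 < γ i j} ∧
    ∀ γ : Matrix (Fin n1) (Fin n2) ℝ, (∀ i j, 0 < γ i j) →
      KL gstar (P1 μ1 (Theta θ0 δ (fun i => (∑ j, γ i j) / μ1 i)) γ) ≤ KL gstar γ ∧
      (¬ (∀ i, ∑ j, γ i j = μ1 i) →
        KL gstar (P1 μ1 (Theta θ0 δ (fun i => (∑ j, γ i j) / μ1 i)) γ) < KL gstar γ) :=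
  stmt_7_general n1 n2 hn1 hn2 μ1 hμ1 gstar hmarg θ0 hθ0 δ hδ
end

section
/- Let η ∈ (0, 1) and set θ* = 2/(1 + √η). Then θ* ∈ (1, 2), the discriminant (1−η)·(θ*)²·((θ*)²(1−η) − 4(θ* − 1)) equals 0, and the SOR local rate at θ* satisfies (1/2)·(θ*)²·(1−η) − (θ* − 1) + (1/2)·√((1−η)(θ*)²((θ*)²(1−η) − 4(θ* − 1))) = (1 − √η)/(1 + √η) = θ* − 1. -/
theorem stmt_13 (η : ℝ) (hη : η ∈ Set.Ioo (0 : ℝ) 1) :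
    (2 / (1 + Real.sqrt η)) ∈ Set.Ioo (1 : ℝ) 2 ∧
    (1 - η) * (2 / (1 + Real.sqrt η)) ^ 2 *
        ((2 / (1 + Real.sqrt η)) ^ 2 * (1 - η) - 4 * (2 / (1 + Real.sqrt η) - 1)) = 0 ∧
    (1 / 2) * (2 / (1 + Real.sqrt η)) ^ 2 * (1 - η) - (2 / (1 + Real.sqrt η) - 1) +
        (1 / 2) * Real.sqrt ((1 - η) * (2 / (1 + Real.sqrt η)) ^ 2 *
          ((2 / (1 + Real.sqrt η)) ^ 2 * (1 - η) - 4 * (2 / (1 + Real.sqrt η) - 1))) =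
      (1 - Real.sqrt η) / (1 + Real.sqrt η) ∧
    (1 - Real.sqrt η) / (1 + Real.sqrt η) = 2 / (1 + Real.sqrt η) - 1 := by
  obtain ⟨h0, h1⟩ := hη
  set s := Real.sqrt η with hs
  have hs2 : s ^ 2 = η := Real.sq_sqrt h0.le
  have hs0 : 0 < s := Real.sqrt_pos.mpr h0
  have hs1 : s < 1 := by
    nlinarith [hs2, hs0]
  have hden : (0:ℝ) < 1 + s := by linarith
  have hdisc : (1 - η) * (2 / (1 + s)) ^ 2 *
      ((2 / (1 + s)) ^ 2 * (1 - η) - 4 * (2 / (1 + s) - 1)) = 0 := by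
    rw [← hs2]; field_simp; ring
  refine ⟨⟨?_, ?_⟩, hdisc, ?_, ?_⟩
  · rw [lt_div_iff₀ hden]; linarith
  · rw [div_lt_iff₀ hden]; linarith
  · rw [hdisc, Real.sqrt_zero]
    rw [← hs2]; field_simp; ring
  · field_simp; ring
end

section
/- Let n1, n2 be positive integers, let μ1 ∈ ℝ^{n1} have strictly positive entries with Σ_i μ1_i equal to the prescribed total mass, and let ξ ∈ ℝ^{n1×n2} have strictly positive entries. Then the matrix diag(μ1 ⊘ A1ξ)·ξ, i.e., the matrix with entries ξ_{ij}·μ1_i/(A1ξ)_i, is the unique minimizer of γ ↦ KL(γ, ξ) over all γ ∈ ℝ^{n1×n2} with nonnegative entries satisfying A1γ = μ1. -/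
open scoped BigOperators

/-- The Bregman projection of `ξ` onto `C1 = {γ : A1 γ = μ1}`:
the matrix with entries `ξ_{ij} μ1_i / (A1 ξ)_i`. -/
noncomputable def projC1 {n1 n2 : ℕ} (μ1 : Fin n1 → ℝ)
    (ξ : Matrix (Fin n1) (Fin n2) ℝ) : Matrix (Fin n1) (Fin n2) ℝ :=
  Matrix.of fun i j => ξ i j * μ1 i / ∑ j', ξ i j'

lemma key_le (x y : ℝ) (hx : 0 ≤ x) (hy : 0 < y) :
    x - y ≤ x * Real.log (x / y) := by
  rcases eq_or_lt_of_le hx with h | h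
  · simp [← h]; linarith
  · have hxy : 0 < y / x := by positivity
    have h1 : Real.log (y / x) ≤ y / x - 1 := Real.log_le_sub_one_of_pos hxy
    have hlog : Real.log (y / x) = - Real.log (x / y) := by
      rw [← Real.log_inv]; congr 1; field_simp
    rw [hlog] at h1
    have h2 : x * (-Real.log (x / y)) ≤ x * (y / x - 1) :=
      mul_le_mul_of_nonneg_left h1 h.le
    have h3 : x * (y / x - 1) = y - x := by field_simp
    nlinarith

lemma key_lt (x y : ℝ) (hx : 0 ≤ x) (hy : 0 < y) (hne : x ≠ y) :
    x - y < x * Real.log (x / y) := by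
  rcases eq_or_lt_of_le hx with h | h
  · simp [← h]; linarith
  · have hxy : 0 < y / x := by positivity
    have hne1 : y / x ≠ 1 := by
      intro hc
      apply hne
      field_simp at hc
      linarith
    have h1 : Real.log (y / x) < y / x - 1 := Real.log_lt_sub_one_of_pos hxy hne1
    have hlog : Real.log (y / x) = - Real.log (x / y) := by
      rw [← Real.log_inv]; congr 1; field_simp
    rw [hlog] at h1
    have h2 : x * (-Real.log (x / y)) < x * (y / x - 1) :=
      mul_lt_mul_of_pos_left h1 h
    have h3 : x * (y / x - 1) = y - x := by field_simp
    nlinarith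

theorem stmt_15 (n1 n2 : ℕ) (hn1 : 0 < n1) (hn2 : 0 < n2)
    (μ1 : Fin n1 → ℝ) (hμ1 : ∀ i, 0 < μ1 i)
    (ξ : Matrix (Fin n1) (Fin n2) ℝ) (hξ : ∀ i j, 0 < ξ i j) :
    ((∀ i j, 0 ≤ projC1 μ1 ξ i j) ∧ (∀ i, ∑ j, projC1 μ1 ξ i j = μ1 i)) ∧
    ∀ γ : Matrix (Fin n1) (Fin n2) ℝ, (∀ i j, 0 ≤ γ i j) →
      (∀ i, ∑ j, γ i j = μ1 i) → γ ≠ projC1 μ1 ξ →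
      KL (projC1 μ1 ξ) ξ < KL γ ξ := by
  have hs : ∀ i, 0 < ∑ j', ξ i j' :=
    fun i => Finset.sum_pos (fun j _ => hξ i j) ⟨⟨0, hn2⟩, Finset.mem_univ _⟩
  set p := projC1 μ1 ξ with hpdef
  have hp : ∀ i j, 0 < p i j := by
    intro i j
    simp only [hpdef, projC1, Matrix.of_apply]
    have := hs i; have := hμ1 i; have := hξ i j
    positivity
  have hrow : ∀ i, ∑ j, p i j = μ1 i := by
    intro i
    simp only [hpdef, projC1, Matrix.of_apply]
    rw [← Finset.sum_div, ← Finset.sum_mul, mul_comm,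
      mul_div_assoc, div_self (hs i).ne', mul_one]
  have hpc : ∀ i j, p i j / ξ i j = μ1 i / ∑ j', ξ i j' := by
    intro i j
    simp only [hpdef, projC1, Matrix.of_apply]
    have h1 := (hξ i j).ne'
    have h2 := (hs i).ne'
    field_simp
  refine ⟨⟨fun i j => (hp i j).le, hrow⟩, ?_⟩
  intro γ hγ0 hγrow hne
  have h1 : ∀ i j, γ i j * Real.log (γ i j / p i j)
      = γ i j * Real.log (γ i j / ξ i j)
        - γ i j * Real.log (μ1 i / ∑ j', ξ i j') := by
    intro i j
    rcases eq_or_lt_of_le (hγ0 i j) with h | h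
    · simp [← h]
    · rw [← hpc i j, Real.log_div h.ne' (hp i j).ne',
        Real.log_div h.ne' (hξ i j).ne', Real.log_div (hp i j).ne' (hξ i j).ne']
      ring
  have e2 : ∀ i, ∑ j, p i j * (Real.log (p i j / ξ i j) - 1)
      = (Real.log (μ1 i / ∑ j', ξ i j') - 1) * μ1 i := by
    intro i
    have : ∀ j, p i j * (Real.log (p i j / ξ i j) - 1)
        = (Real.log (μ1 i / ∑ j', ξ i j') - 1) * p i j := by
      intro j; rw [hpc i j]; ring
    rw [Finset.sum_congr rfl (fun j _ => this j), ← Finset.mul_sum, hrow i]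
  have e1 : ∀ i, ∑ j, (γ i j * Real.log (γ i j / p i j) - γ i j + p i j)
      = (∑ j, γ i j * (Real.log (γ i j / ξ i j) - 1))
        - Real.log (μ1 i / ∑ j', ξ i j') * μ1 i + μ1 i := by
    intro i
    have step : ∀ j, γ i j * Real.log (γ i j / p i j) - γ i j + p i j
        = γ i j * (Real.log (γ i j / ξ i j) - 1)
          - Real.log (μ1 i / ∑ j', ξ i j') * γ i j + p i j := by
      intro j; rw [h1 i j]; ring
    rw [Finset.sum_congr rfl (fun j _ => step j)]
    rw [Finset.sum_add_distrib, Finset.sum_sub_distrib, ← Finset.mul_sum,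
      hγrow i, hrow i]
  have key : ∑ i, ∑ j, (γ i j * Real.log (γ i j / p i j) - γ i j + p i j)
      = KL γ ξ - KL p ξ := by
    have : ∑ i, ∑ j, (γ i j * Real.log (γ i j / p i j) - γ i j + p i j)
        = ∑ i, ((∑ j, γ i j * (Real.log (γ i j / ξ i j) - 1))
            - ∑ j, p i j * (Real.log (p i j / ξ i j) - 1)) := by
      refine Finset.sum_congr rfl fun i _ => ?_
      rw [e1 i, e2 i]; ring
    rw [this, Finset.sum_sub_distrib]
    unfold KL
    ring
  have hterm : ∀ i j, 0 ≤ γ i j * Real.log (γ i j / p i j) - γ i j + p i j := by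
    intro i j
    have := key_le (γ i j) (p i j) (hγ0 i j) (hp i j)
    linarith
  obtain ⟨i0, j0, hne0⟩ : ∃ i j, γ i j ≠ p i j := by
    by_contra h
    push_neg at h
    exact hne (by ext i j; exact h i j)
  have pos : 0 < ∑ i, ∑ j, (γ i j * Real.log (γ i j / p i j) - γ i j + p i j) := by
    refine Finset.sum_pos' (fun i _ => Finset.sum_nonneg fun j _ => hterm i j)
      ⟨i0, Finset.mem_univ _, Finset.sum_pos' (fun j _ => hterm i0 j)
        ⟨j0, Finset.mem_univ _, ?_⟩⟩
    have := key_lt (γ i0 j0) (p i0 j0) (hγ0 i0 j0) (hp i0 j0) hne0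
    linarith
  linarith [key, pos]
end

section
/- Let n1, n2 be positive integers and let μ1 ∈ ℝ^{n1} have strictly positive entries. Then the 2-overrelaxed projection P²_{C1} is an involution on entrywise positive matrices: for every γ ∈ ℝ^{n1×n2} with strictly positive entries, P²_{C1}(P²_{C1}(γ)) = γ. -/
open scoped BigOperators

theorem stmt_16 (n1 n2 : ℕ) (hn1 : 0 < n1) (hn2 : 0 < n2)
    (μ1 : Fin n1 → ℝ) (hμ1 : ∀ i, 0 < μ1 i)
    (γ : Matrix (Fin n1) (Fin n2) ℝ) (hγ : ∀ i j, 0 < γ i j) :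
    P1 μ1 2 (P1 μ1 2 γ) = γ := by
  have hs : ∀ i, 0 < ∑ j', γ i j' :=
    fun i => Finset.sum_pos (fun j _ => hγ i j) (Finset.univ_nonempty_iff.2 ⟨⟨0, hn2⟩⟩)
  ext i j
  simp only [P1, Matrix.of_apply, ← Finset.sum_mul]
  rw [Real.rpow_two, Real.rpow_two]
  have h1 : (0:ℝ) < ∑ j', γ i j' := hs i
  have h2 : (0:ℝ) < μ1 i := hμ1 i
  field_simp
end

section
/- Let n1, n2 be positive integers, c ∈ ℝ^{n1×n2}, ε > 0, and let μ1 ∈ ℝ^{n1} have strictly positive entries. For every fixed β ∈ ℝ^{n2}, the function α ↦ E(α, β) = ⟨α, μ1⟩ + ⟨β, μ2⟩ − ε·Σ_{i,j} e^{(α_i + β_j − c_{ij})/ε} attains its maximum over ℝ^{n1} at the unique point given coordinatewise by α_i = ε·log(μ1_i) − ε·log(Σ_j e^{(β_j − c_{ij})/ε}). -/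
open scoped BigOperators

/-- The dual objective
`E(α, β) = ⟨α, μ1⟩ + ⟨β, μ2⟩ − ε Σ_{ij} exp((α_i + β_j − c_{ij})/ε)`. -/
noncomputable def Edual {n1 n2 : ℕ} (c : Matrix (Fin n1) (Fin n2) ℝ) (ε : ℝ)
    (μ1 : Fin n1 → ℝ) (μ2 : Fin n2 → ℝ) (α : Fin n1 → ℝ) (β : Fin n2 → ℝ) : ℝ :=
  (∑ i, α i * μ1 i) + (∑ j, β j * μ2 j) -
    ε * ∑ i, ∑ j, Real.exp ((α i + β j - c i j) / ε)

theorem stmt_18 (n1 n2 : ℕ) (hn1 : 0 < n1) (hn2 : 0 < n2)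
    (c : Matrix (Fin n1) (Fin n2) ℝ) (ε : ℝ) (hε : 0 < ε)
    (μ1 : Fin n1 → ℝ) (hμ1 : ∀ i, 0 < μ1 i) (μ2 : Fin n2 → ℝ)
    (β : Fin n2 → ℝ) :
    (∀ α : Fin n1 → ℝ,
      Edual c ε μ1 μ2 α β ≤
        Edual c ε μ1 μ2
          (fun i => ε * Real.log (μ1 i) -
            ε * Real.log (∑ j, Real.exp ((β j - c i j) / ε))) β) ∧
    ∀ α : Fin n1 → ℝ,
      Edual c ε μ1 μ2 α β =
        Edual c ε μ1 μ2
          (fun i => ε * Real.log (μ1 i) -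
            ε * Real.log (∑ j, Real.exp ((β j - c i j) / ε))) β →
      α = fun i => ε * Real.log (μ1 i) -
            ε * Real.log (∑ j, Real.exp ((β j - c i j) / ε)) := by
  have hεne : ε ≠ 0 := ne_of_gt hε
  set S : Fin n1 → ℝ := fun i => ∑ j, Real.exp ((β j - c i j) / ε) with hSdef
  set a : Fin n1 → ℝ := fun i => ε * Real.log (μ1 i) - ε * Real.log (S i) with hadef
  have hS : ∀ i, 0 < S i := by
    intro i
    exact Finset.sum_pos (fun j _ => Real.exp_pos _)
      (Finset.univ_nonempty_iff.2 ⟨⟨0, hn2⟩⟩)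
  have hexpa : ∀ i, Real.exp (a i / ε) = μ1 i / (S i) := by
    intro i
    have : a i / ε = Real.log (μ1 i) - Real.log (S i) := by
      field_simp [hadef]
      ring
    rw [this, Real.exp_sub, Real.exp_log (hμ1 i), Real.exp_log (hS i)]
  have hkey : ∀ (x : ℝ) (i : Fin n1),
      ∑ j, Real.exp ((x + β j - c i j) / ε) = Real.exp ((x - a i) / ε) * μ1 i := by
    intro x i
    have h1 : ∀ j, Real.exp ((x + β j - c i j) / ε)
        = Real.exp (x / ε) * Real.exp ((β j - c i j) / ε) := by
      intro j
      rw [← Real.exp_add]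
      congr 1
      ring
    calc ∑ j, Real.exp ((x + β j - c i j) / ε)
        = Real.exp (x / ε) * S i := by
          rw [hSdef]
          simp only [Finset.mul_sum]
          exact Finset.sum_congr rfl fun j _ => h1 j
      _ = Real.exp ((x - a i) / ε) * μ1 i := by
          have : Real.exp ((x - a i) / ε) = Real.exp (x / ε) / Real.exp (a i / ε) := by
            rw [← Real.exp_sub]; congr 1; ring
          rw [this, hexpa i]
          field_simp [(hμ1 i).ne', (hS i).ne']
  have hdouble : ∀ f : Fin n1 → ℝ,
      ∑ i, ∑ j, Real.exp ((f i + β j - c i j) / ε)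
        = ∑ i, Real.exp ((f i - a i) / ε) * μ1 i :=
    fun f => Finset.sum_congr rfl fun i _ => hkey (f i) i
  have hdiff : ∀ α : Fin n1 → ℝ,
      Edual c ε μ1 μ2 a β - Edual c ε μ1 μ2 α β
        = ∑ i, ε * μ1 i * (Real.exp ((α i - a i) / ε) - 1 - (α i - a i) / ε) := by
    intro α
    have e1 : Edual c ε μ1 μ2 a β = (∑ i, a i * μ1 i) + (∑ j, β j * μ2 j) -
        ε * ∑ i, Real.exp ((a i - a i) / ε) * μ1 i := by
      rw [Edual, hdouble]
    have e2 : Edual c ε μ1 μ2 α β = (∑ i, α i * μ1 i) + (∑ j, β j * μ2 j) -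
        ε * ∑ i, Real.exp ((α i - a i) / ε) * μ1 i := by
      rw [Edual, hdouble]
    rw [e1, e2]
    simp only [sub_self, zero_div, Real.exp_zero, one_mul]
    rw [Finset.mul_sum, Finset.mul_sum]
    have hR : ∑ i, ε * μ1 i * (Real.exp ((α i - a i) / ε) - 1 - (α i - a i) / ε)
        = (∑ i, (a i * μ1 i - ε * μ1 i)) - ∑ i, (α i * μ1 i - ε * (Real.exp ((α i - a i) / ε) * μ1 i)) := by
      rw [← Finset.sum_sub_distrib]
      apply Finset.sum_congr rfl
      intro i _
      field_simp
      ring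
    rw [hR, Finset.sum_sub_distrib, Finset.sum_sub_distrib]
    ring
  have hterm_nonneg : ∀ (α : Fin n1 → ℝ) (i : Fin n1),
      0 ≤ ε * μ1 i * (Real.exp ((α i - a i) / ε) - 1 - (α i - a i) / ε) := by
    intro α i
    apply mul_nonneg (mul_nonneg hε.le (hμ1 i).le)
    have := Real.add_one_le_exp ((α i - a i) / ε)
    linarith
  constructor
  · intro α
    have := hdiff α
    have h0 : 0 ≤ Edual c ε μ1 μ2 a β - Edual c ε μ1 μ2 α β := by
      rw [this]
      exact Finset.sum_nonneg fun i _ => hterm_nonneg α i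
    linarith
  · intro α h
    have hz : ∑ i : Fin n1, ε * μ1 i * (Real.exp ((α i - a i) / ε) - 1 - (α i - a i) / ε) = 0 := by
      rw [← hdiff α, h]; ring
    have hall := (Finset.sum_eq_zero_iff_of_nonneg (fun i _ => hterm_nonneg α i)).1 hz
    funext i
    have hi := hall i (Finset.mem_univ i)
    by_contra hne
    have ht : (α i - a i) / ε ≠ 0 := by
      intro h0
      exact hne (sub_eq_zero.1 ((div_eq_zero_iff.1 h0).resolve_right hεne))
    have hlt := Real.add_one_lt_exp ht
    have hpos : 0 < ε * μ1 i * (Real.exp ((α i - a i) / ε) - 1 - (α i - a i) / ε) := by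
      apply mul_pos (mul_pos hε (hμ1 i))
      linarith
    linarith [hi, hpos]
end
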